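/- arXiv:1704.05814 — 11 statements merged into one kernel-verified Lean document; each statement's English description precedes it below -/
import Mathlib

section
/- For all natural numbers a, b one has {tr(X^a), tr(X^b)} = 0 in 𝒪ₙ; that is, the traces of powers of X pairwise commute under the quasi-Poisson bracket induced on the representation space of the tadpole quiver. -/
open Matrix Finset

/-- The polynomial ring `𝒪ₙ = ℂ[X_{ij}, Z_{ij}]` in the entries of two `n × n` matrices. -/
noncomputable abbrev Oring (n : ℕ) : Type :=
  MvPolynomial ((Fin n × Fin n) ⊕ (Fin n × Fin n)) ℂ

/-- The matrix `X` with polynomial entries `X_{ij}`. -/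
noncomputable def Xm (n : ℕ) : Matrix (Fin n) (Fin n) (Oring n) :=
  Matrix.of fun i j => MvPolynomial.X (Sum.inl (i, j))

/-- The matrix `Z` with polynomial entries `Z_{ij}`. -/
noncomputable def Zm (n : ℕ) : Matrix (Fin n) (Fin n) (Oring n) :=
  Matrix.of fun i j => MvPolynomial.X (Sum.inr (i, j))

/-- Kronecker delta in `𝒪ₙ`. -/
noncomputable def kd (n : ℕ) (i j : Fin n) : Oring n := if i = j then 1 else 0

/-!
For a derivation `D` of a commutative ring and a square matrix `M`, `D (tr Mᵇ)` is a sum of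
terms `tr (Mᵏ · D M · Mᵇ⁻¹⁻ᵏ)`, so by cyclicity it vanishes as soon as `tr (P · D M) = 0` for every
`P` commuting with `M`. For `D = {X_ij, -}` the generator relations say `D X = ½ [X², E_ji]`, and
`tr (P [X², E_ji]) = tr ([P, X²] E_ji) = 0` when `P` commutes with `X`; hence `{X_ij, tr Xᵇ} = 0`.
By antisymmetry `f ↦ {f, tr Xᵇ}` is also a derivation, and it kills every entry of `X`, hence `tr Xᵃ`.
-/

namespace Derivation

variable {R A : Type*} [CommSemiring R] [CommRing A] [Algebra R A]

def ofLeibniz (D : A → A) (hadd : ∀ f g, D (f + g) = D f + D g)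
    (hsmul : ∀ (c : R) f, D (c • f) = c • D f) (hleib : ∀ f g, D (f * g) = D f * g + f * D g) :
    Derivation R A A :=
  mk' ⟨⟨D, hadd⟩, hsmul⟩ fun f g => by
    simp only [LinearMap.coe_mk, AddHom.coe_mk, hleib, smul_eq_mul]
    ring

variable {ι : Type*} (D : Derivation R A A)

theorem map_matrix_one [DecidableEq ι] : (1 : Matrix ι ι A).map D = 0 := by
  ext i j
  by_cases h : i = j <;> simp [one_apply, h]

theorem map_matrix_mul [Fintype ι] (M N : Matrix ι ι A) :
    (M * N).map D = M.map D * N + M * N.map D := by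
  ext i j
  simp [mul_apply, leibniz, sum_add_distrib, mul_comm, add_comm]

theorem trace_mul_map_pow_eq_zero [Fintype ι] [DecidableEq ι] {M : Matrix ι ι A}
    (hM : ∀ P, Commute P M → trace (P * M.map D) = 0) (b : ℕ) :
    ∀ P, Commute P M → trace (P * (M ^ b).map D) = 0 := by
  induction b with
  | zero => intro P _; simp [map_matrix_one]
  | succ b ih =>
    intro P hP
    rw [pow_succ, map_matrix_mul, Matrix.mul_add, trace_add, trace_mul_cycle', ← Matrix.mul_assoc,
      ← hP.eq, ih _ (hP.mul_left (Commute.refl M)), ← Matrix.mul_assoc,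
      hM _ (hP.mul_left ((Commute.refl M).pow_left b)), add_zero]

theorem map_trace_pow_eq_zero [Fintype ι] [DecidableEq ι] {M : Matrix ι ι A}
    (hM : ∀ P, Commute P M → trace (P * M.map D) = 0) (b : ℕ) : D (trace (M ^ b)) = 0 := by
  simpa [AddMonoidHom.map_trace] using trace_mul_map_pow_eq_zero D hM b 1 (Commute.one_left M)

end Derivation

theorem Matrix.trace_mul_commutator_eq_zero {ι A : Type*} [Fintype ι] [CommRing A]
    {P N : Matrix ι ι A} (h : Commute P N) (E : Matrix ι ι A) :
    trace (P * (N * E - E * N)) = 0 := by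
  rw [Matrix.mul_sub, trace_sub, ← Matrix.mul_assoc, h.eq, Matrix.mul_assoc, trace_mul_comm N,
    ← Matrix.mul_assoc P E, sub_self]

section Oring

variable {n : ℕ} (N : Matrix (Fin n) (Fin n) (Oring n)) (i j u v : Fin n)

theorem mul_single_one_apply_eq_mul_kd :
    (N * single j i (1 : Oring n)) u v = N u j * kd n i v := by
  by_cases h : v = i
  · simp [kd, h]
  · simp [kd, h, Ne.symm h, mul_single_apply_of_ne]

theorem single_one_mul_apply_eq_kd_mul :
    (single j i (1 : Oring n) * N) u v = kd n u j * N i v := by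
  by_cases h : u = j <;> simp [kd, h]

end Oring

theorem trace_pow_X_bracket_trace_pow_X_general (n : ℕ)
    (br : Oring n → Oring n → Oring n)
    (hadd : ∀ f g h : Oring n, br f (g + h) = br f g + br f h)
    (hsmul : ∀ (c : ℂ) (f g : Oring n), br f (c • g) = c • br f g)
    (hleib : ∀ f g h : Oring n, br f (g * h) = br f g * h + g * br f h)
    (hanti : ∀ f g : Oring n, br f g = - br g f)
    (hXX : ∀ i j u v : Fin n,
      br (Xm n i j) (Xm n u v) =
        (2⁻¹ : ℂ) • ((Xm n ^ 2) u j * kd n i v) - (2⁻¹ : ℂ) • (kd n u j * (Xm n ^ 2) i v))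
    (a b : ℕ) :
    br (Matrix.trace (Xm n ^ a)) (Matrix.trace (Xm n ^ b)) = 0 := by
  have hX_trace : ∀ i j, br (Xm n i j) (trace (Xm n ^ b)) = 0 := by
    intro i j
    let D := Derivation.ofLeibniz (R := ℂ) (br (Xm n i j)) (hadd _) (hsmul · _) (hleib _)
    have hD : (Xm n).map D = (2⁻¹ : ℂ) • (Xm n ^ 2 * single j i 1 - single j i 1 * Xm n ^ 2) :=
      Matrix.ext fun u v => by
        rw [map_apply, Matrix.smul_apply, Matrix.sub_apply, mul_single_one_apply_eq_mul_kd,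
          single_one_mul_apply_eq_kd_mul, smul_sub]
        exact hXX i j u v
    refine D.map_trace_pow_eq_zero (fun P hP => ?_) b
    rw [hD, Matrix.mul_smul, trace_smul, trace_mul_commutator_eq_zero (hP.pow_right 2), smul_zero]
  let D := Derivation.ofLeibniz (R := ℂ) (br · (trace (Xm n ^ b)))
    (fun f g => by rw [hanti, hadd, neg_add, ← hanti, ← hanti])
    (fun c f => by rw [hanti, hsmul, ← smul_neg, ← hanti])
    (fun f g => by rw [hanti, hleib, hanti f, hanti g]; ring)
  have hD : (Xm n).map D = 0 := Matrix.ext hX_trace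
  exact D.map_trace_pow_eq_zero (fun P _ => by rw [hD, Matrix.mul_zero, trace_zero]) a

/-- the traces of powers of `X` pairwise commute under the (unique)
antisymmetric biderivation with the prescribed values on generators. -/
theorem trace_pow_X_bracket_trace_pow_X (n : ℕ) (hn : 1 ≤ n)
    (br : Oring n → Oring n → Oring n)
    (hadd : ∀ f g h : Oring n, br f (g + h) = br f g + br f h)
    (hsmul : ∀ (c : ℂ) (f g : Oring n), br f (c • g) = c • br f g)
    (hleib : ∀ f g h : Oring n, br f (g * h) = br f g * h + g * br f h)
    (hanti : ∀ f g : Oring n, br f g = - br g f)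
    (hXX : ∀ i j u v : Fin n,
      br (Xm n i j) (Xm n u v) =
        (2⁻¹ : ℂ) • ((Xm n ^ 2) u j * kd n i v) - (2⁻¹ : ℂ) • (kd n u j * (Xm n ^ 2) i v))
    (hZZ : ∀ i j u v : Fin n,
      br (Zm n i j) (Zm n u v) =
        (2⁻¹ : ℂ) • (kd n u j * (Zm n ^ 2) i v) - (2⁻¹ : ℂ) • ((Zm n ^ 2) u j * kd n i v))
    (hXZ : ∀ i j u v : Fin n,
      br (Xm n i j) (Zm n u v) =
        (2⁻¹ : ℂ) • ((Zm n * Xm n) u j * kd n i v)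
          + (2⁻¹ : ℂ) • (kd n u j * (Xm n * Zm n) i v)
          + (2⁻¹ : ℂ) • (Zm n u j * Xm n i v)
          - (2⁻¹ : ℂ) • (Xm n u j * Zm n i v))
    (a b : ℕ) :
    br (Matrix.trace (Xm n ^ a)) (Matrix.trace (Xm n ^ b)) = 0 :=
  trace_pow_X_bracket_trace_pow_X_general n br hadd hsmul hleib hanti hXX a b
end

section
/- For all natural numbers a, b one has {tr(Z^a), tr(Z^b)} = 0 in 𝒪ₙ; that is, the traces of powers of Z (the Ruijsenaars–Schneider Hamiltonians) pairwise commute under the quasi-Poisson bracket induced on the representation space of the tadpole quiver. -/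
open Matrix Finset

/-! Each `{f, -}` is a derivation, so applying it to `tr (Z ^ m)` gives
`m • tr (D Z * Z ^ (m - 1))`, where `D Z` is the matrix of brackets `{f, Z_ij}`.
For `f = Z_uv` the `ZZ` bracket makes `D Z = ½ [E_vu, Z²]`, and its trace against `Z ^ (a - 1)`
vanishes since `Z²` commutes with `Z ^ (a - 1)`. Hence `{tr Z^a, -}` kills every entry of `Z`,
and therefore `tr Z^b`. -/

namespace Matrix

variable {S R ι : Type*} [CommSemiring S] [CommSemiring R] [Algebra S R] [Fintype ι]
  (D : Derivation S R R)

theorem derivation_trace (A : Matrix ι ι R) : D A.trace = (A.map D).trace := by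
  simp only [trace, diag, map_sum, map_apply]

theorem map_mul_derivation (A B : Matrix ι ι R) :
    (A * B).map D = A.map D * B + A * B.map D := by
  ext i j
  simp only [map_apply, mul_apply, add_apply, map_sum, Derivation.leibniz, smul_eq_mul,
    ← Finset.sum_add_distrib]
  exact Finset.sum_congr rfl fun k _ => by ring

variable [DecidableEq ι]

theorem map_pow_succ_derivation (M : Matrix ι ι R) (m : ℕ) :
    (M ^ (m + 1)).map D = ∑ p ∈ antidiagonal m, M ^ p.1 * M.map D * M ^ p.2 := by
  induction m with
  | zero => simp
  | succ m ih =>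
    rw [pow_succ, map_mul_derivation, ih, Finset.Nat.sum_antidiagonal_succ', Finset.sum_mul,
      add_comm]
    simp only [pow_succ, pow_zero, mul_one, mul_assoc]

theorem derivation_trace_pow (M : Matrix ι ι R) (m : ℕ) :
    D (M ^ m).trace = m • (M.map D * M ^ (m - 1)).trace := by
  cases m with
  | zero => simp [trace_one]
  | succ m =>
    have hcyc : ∀ p ∈ antidiagonal m,
        (M ^ p.1 * M.map D * M ^ p.2).trace = (M.map D * M ^ m).trace := fun p hp => by
      rw [mul_assoc, trace_mul_comm, mul_assoc, ← pow_add, add_comm, mem_antidiagonal.mp hp]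
    rw [derivation_trace, map_pow_succ_derivation, trace_sum, Finset.sum_congr rfl hcyc,
      Finset.sum_const, Finset.Nat.card_antidiagonal, add_tsub_cancel_right]

end Matrix

theorem Matrix.trace_commutator_mul_of_commute {R ι : Type*} [CommRing R] [Fintype ι]
    (E : Matrix ι ι R) {P Q : Matrix ι ι R} (h : Commute P Q) :
    ((E * P - P * E) * Q).trace = 0 := by
  rw [sub_mul, trace_sub, mul_assoc, mul_assoc, trace_mul_comm P, mul_assoc, h.eq, sub_self]

def leibnizDerivation {R : Type*} [CommRing R] (d : R → R)
    (hadd : ∀ x y, d (x + y) = d x + d y) (hleib : ∀ x y, d (x * y) = d x * y + x * d y) :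
    Derivation ℤ R R :=
  Derivation.mk' (AddMonoidHom.mk' d hadd).toIntLinearMap fun x y => by
    simp only [AddMonoidHom.coe_toIntLinearMap, AddMonoidHom.mk'_apply, hleib, smul_eq_mul]
    ring

theorem coe_leibnizDerivation {R : Type*} [CommRing R] (d : R → R)
    (hadd : ∀ x y, d (x + y) = d x + d y) (hleib : ∀ x y, d (x * y) = d x * y + x * d y) :
    ⇑(leibnizDerivation d hadd hleib) = d :=
  rfl

theorem Zm_map_bracket_entry {n : ℕ} (br : Oring n → Oring n → Oring n)
    (hZZ : ∀ i j u v : Fin n,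
      br (Zm n i j) (Zm n u v) =
        (2⁻¹ : ℂ) • (kd n u j * (Zm n ^ 2) i v) - (2⁻¹ : ℂ) • ((Zm n ^ 2) u j * kd n i v))
    (u v : Fin n) :
    (Zm n).map (br (Zm n u v)) =
      (2⁻¹ : ℂ) • (single v u 1 * Zm n ^ 2 - Zm n ^ 2 * single v u 1) := by
  refine Matrix.ext fun i j => ?_
  rw [map_apply, hZZ]
  simp [kd, single, mul_apply, ite_and, Finset.sum_ite_irrel, smul_sub, eq_comm]

theorem trace_pow_Z_bracket_trace_pow_Z_general (n : ℕ)
    (br : Oring n → Oring n → Oring n)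
    (hadd : ∀ f g h : Oring n, br f (g + h) = br f g + br f h)
    (hleib : ∀ f g h : Oring n, br f (g * h) = br f g * h + g * br f h)
    (hanti : ∀ f g : Oring n, br f g = - br g f)
    (hZZ : ∀ i j u v : Fin n,
      br (Zm n i j) (Zm n u v) =
        (2⁻¹ : ℂ) • (kd n u j * (Zm n ^ 2) i v) - (2⁻¹ : ℂ) • ((Zm n ^ 2) u j * kd n i v))
    (a b : ℕ) :
    br (Matrix.trace (Zm n ^ a)) (Matrix.trace (Zm n ^ b)) = 0 := by
  have hbr (f : Oring n) : br f = leibnizDerivation (br f) (hadd f) (hleib f) := rfl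
  have hZ : (Zm n).map (br (Zm n ^ a).trace) = 0 := by
    refine Matrix.ext fun u v => ?_
    rw [map_apply, Matrix.zero_apply, hanti, neg_eq_zero, hbr, derivation_trace_pow,
      coe_leibnizDerivation, Zm_map_bracket_entry br hZZ, smul_mul, trace_smul,
      trace_commutator_mul_of_commute _ (Commute.pow_pow_self _ 2 (a - 1)), smul_zero, smul_zero]
  rw [hbr, derivation_trace_pow, coe_leibnizDerivation, hZ, Matrix.zero_mul, trace_zero, smul_zero]

/-- the traces of powers of `Z` (the Ruijsenaars–Schneider Hamiltonians)
pairwise commute under the quasi-Poisson bracket. -/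
theorem trace_pow_Z_bracket_trace_pow_Z (n : ℕ) (hn : 1 ≤ n)
    (br : Oring n → Oring n → Oring n)
    (hadd : ∀ f g h : Oring n, br f (g + h) = br f g + br f h)
    (hsmul : ∀ (c : ℂ) (f g : Oring n), br f (c • g) = c • br f g)
    (hleib : ∀ f g h : Oring n, br f (g * h) = br f g * h + g * br f h)
    (hanti : ∀ f g : Oring n, br f g = - br g f)
    (hXX : ∀ i j u v : Fin n,
      br (Xm n i j) (Xm n u v) =
        (2⁻¹ : ℂ) • ((Xm n ^ 2) u j * kd n i v) - (2⁻¹ : ℂ) • (kd n u j * (Xm n ^ 2) i v))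
    (hZZ : ∀ i j u v : Fin n,
      br (Zm n i j) (Zm n u v) =
        (2⁻¹ : ℂ) • (kd n u j * (Zm n ^ 2) i v) - (2⁻¹ : ℂ) • ((Zm n ^ 2) u j * kd n i v))
    (hXZ : ∀ i j u v : Fin n,
      br (Xm n i j) (Zm n u v) =
        (2⁻¹ : ℂ) • ((Zm n * Xm n) u j * kd n i v)
          + (2⁻¹ : ℂ) • (kd n u j * (Xm n * Zm n) i v)
          + (2⁻¹ : ℂ) • (Zm n u j * Xm n i v)
          - (2⁻¹ : ℂ) • (Xm n u j * Zm n i v))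
    (a b : ℕ) :
    br (Matrix.trace (Zm n ^ a)) (Matrix.trace (Zm n ^ b)) = 0 :=
  trace_pow_Z_bracket_trace_pow_Z_general n br hadd hleib hanti hZZ a b
end

section
/- For all natural numbers a, b one has {tr(X^a), tr(Z X^b)} = a · tr(Z X^{a+b}) in 𝒪ₙ. -/
open Matrix Finset

/-!
For fixed `f`, the map `{f, -}` is a derivation `D`, and applying `D` entrywise to matrices obeys
the Leibniz rule, so `D (tr M^k) = k tr(M^(k-1) D(M))`. With `D = {X_ij, -}` the matrix `D(X)` is
the commutator `[X²/2, E_ji]` of a matrix commuting with `X` with a matrix unit, hence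
`{X_ij, tr X^a} = 0`; with `D = {Z_uv, -}` the trace identity gives
`{Z_uv, tr X^a} = -a (Z X^a)_uv`. So `{tr X^a, -}` kills every `X_ij` and sends `Z` to
`a Z X^a`, and the Leibniz rule applied to `tr(Z X^b)` gives `a tr(Z X^(a+b))`.
-/

namespace Derivation

variable {S R ι : Type*} [CommSemiring S] [CommSemiring R] [Algebra S R] [Fintype ι]
  (D : Derivation S R R)

theorem apply_trace (A : Matrix ι ι R) : D A.trace = (A.map D).trace :=
  map_sum D _ _

theorem matrix_map_mul (A B : Matrix ι ι R) :
    (A * B).map D = A.map D * B + A * B.map D := by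
  ext i j
  simp only [map_apply, mul_apply, Matrix.add_apply, map_sum, leibniz, smul_eq_mul,
    ← sum_add_distrib]
  exact sum_congr rfl fun k _ => by ring

theorem matrix_map_pow [DecidableEq ι] (M : Matrix ι ι R) (k : ℕ) :
    (M ^ k).map D = ∑ i ∈ range k, M ^ i * M.map D * M ^ (k - 1 - i) := by
  induction k with
  | zero =>
    ext i j
    by_cases h : i = j <;> simp [one_apply, h]
  | succ k ih =>
    rw [pow_succ, matrix_map_mul, ih, sum_mul, sum_range_succ, Nat.add_sub_cancel, Nat.sub_self,
      pow_zero, mul_one]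
    congr 1
    refine sum_congr rfl fun i hi => ?_
    have hik := mem_range.mp hi
    rw [mul_assoc _ (M ^ _), ← pow_succ, show k - 1 - i + 1 = k - i by omega]

theorem apply_trace_pow [DecidableEq ι] (M : Matrix ι ι R) (k : ℕ) :
    D (M ^ k).trace = k • (M ^ (k - 1) * M.map D).trace := by
  rw [apply_trace, matrix_map_pow, trace_sum]
  calc ∑ i ∈ range k, (M ^ i * M.map D * M ^ (k - 1 - i)).trace
      = ∑ _i ∈ range k, (M ^ (k - 1) * M.map D).trace := sum_congr rfl fun i hi => by
        rw [trace_mul_cycle, ← pow_add, Nat.sub_add_cancel (by grind)]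
    _ = _ := by rw [sum_const, card_range]

end Derivation

theorem Derivation.apply_trace_pow_eq_zero {S R ι : Type*} [CommSemiring S] [CommRing R]
    [Algebra S R] [Fintype ι] [DecidableEq ι] (D : Derivation S R R) {M N E : Matrix ι ι R}
    (hMN : Commute M N) (hD : M.map D = N * E - E * N) (k : ℕ) : D (M ^ k).trace = 0 := by
  have hcomm : (M ^ (k - 1) * (N * E)).trace = (M ^ (k - 1) * (E * N)).trace := by
    rw [← mul_assoc, (hMN.pow_left _).eq, mul_assoc, trace_mul_comm, mul_assoc]
  rw [apply_trace_pow, hD, mul_sub, trace_sub, hcomm, sub_self, smul_zero]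

def Derivation.ofAddLeibniz {R : Type*} [CommRing R] (D : R → R)
    (hadd : ∀ f g, D (f + g) = D f + D g) (hleib : ∀ f g, D (f * g) = D f * g + f * D g) :
    Derivation ℤ R R :=
  Derivation.mk' (AddMonoidHom.mk' D hadd).toIntLinearMap fun f g => by
    simp [hleib, mul_comm, add_comm]

section PoissonBracket

variable {n : ℕ}

theorem mul_single_one_apply (A : Matrix (Fin n) (Fin n) (Oring n)) (i j p r : Fin n) :
    (A * Matrix.single i j (1 : Oring n)) p r = A p i * kd n j r := by
  by_cases h : j = r
  · subst h; simp [kd]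
  · simp [kd, h, Ne.symm h]

theorem single_one_mul_apply (A : Matrix (Fin n) (Fin n) (Oring n)) (i j p r : Fin n) :
    (Matrix.single i j (1 : Oring n) * A) p r = kd n p i * A j r := by
  by_cases h : p = i
  · subst h; simp [kd]
  · simp [kd, h]

theorem mul_single_one_mul_apply (A B : Matrix (Fin n) (Fin n) (Oring n)) (i j p r : Fin n) :
    (A * Matrix.single i j (1 : Oring n) * B) p r = A p i * B j r := by
  rw [mul_apply]
  simp [mul_single_one_apply, kd]

variable {S : Type*} [CommSemiring S] [Algebra S (Oring n)] (D : Derivation S (Oring n) (Oring n))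

theorem Derivation.apply_trace_Xm_pow_eq_zero (i j : Fin n)
    (hD : ∀ u v, D (Xm n u v) =
      (2⁻¹ : ℂ) • ((Xm n ^ 2) u j * kd n i v) - (2⁻¹ : ℂ) • (kd n u j * (Xm n ^ 2) i v))
    (k : ℕ) : D (Xm n ^ k).trace = 0 := by
  refine D.apply_trace_pow_eq_zero (N := (2⁻¹ : ℂ) • Xm n ^ 2) (E := Matrix.single j i 1)
    (((Commute.refl _).pow_right 2).smul_right _) (Matrix.ext fun u v => ?_) k
  simp only [map_apply, hD, Matrix.sub_apply, Matrix.smul_mul, Matrix.mul_smul, Matrix.smul_apply,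
    mul_single_one_apply, single_one_mul_apply]

theorem Derivation.apply_trace_Xm_pow_eq_neg_mul (u v : Fin n)
    (hD : ∀ p r, D (Xm n p r) =
      -((2⁻¹ : ℂ) • ((Zm n * Xm n) u r * kd n p v)
        + (2⁻¹ : ℂ) • (kd n u r * (Xm n * Zm n) p v)
        + (2⁻¹ : ℂ) • (Zm n u r * Xm n p v)
        - (2⁻¹ : ℂ) • (Xm n u r * Zm n p v)))
    (k : ℕ) : D (Xm n ^ k).trace = -(k * (Zm n * Xm n ^ k) u v) := by
  set E : Matrix (Fin n) (Fin n) (Oring n) := Matrix.single v u 1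
  have hmap : (Xm n).map D =
      -((2⁻¹ : ℂ) • (E * (Zm n * Xm n) + Xm n * Zm n * E + Xm n * E * Zm n - Zm n * E * Xm n)) :=
    Matrix.ext fun p r => by
      simp only [E, map_apply, hD, Matrix.neg_apply, Matrix.smul_apply, Matrix.add_apply,
        Matrix.sub_apply, mul_single_one_apply, single_one_mul_apply, mul_single_one_mul_apply,
        smul_add, smul_sub, mul_comm]
  rw [D.apply_trace_pow]
  cases k with
  | zero => simp
  | succ k =>
    have htrace : (Xm n ^ k * (Xm n).map D).trace = -(Zm n * Xm n ^ (k + 1)) u v := by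
      -- by cyclicity each trace is an entry of `Z X^(k+1)` or of `X^(k+1) Z`; the latter cancel
      rw [trace_mul_comm, hmap]
      simp only [E, Matrix.add_mul, Matrix.sub_mul, Matrix.neg_mul, Matrix.smul_mul, trace_add,
        trace_sub, trace_neg, trace_smul, mul_assoc, trace_single_mul, trace_mul_comm (Xm n),
        trace_mul_comm (Zm n), one_smul]
      rw [← pow_succ', ← pow_succ, ← mul_assoc (Xm n ^ k), ← pow_succ, ← mul_assoc (Xm n),
        ← pow_succ']
      module
    rw [Nat.add_sub_cancel, htrace, nsmul_eq_mul, mul_neg]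

end PoissonBracket

theorem trace_pow_X_bracket_trace_ZX_general (n : ℕ)
    (br : Oring n → Oring n → Oring n)
    (hadd : ∀ f g h : Oring n, br f (g + h) = br f g + br f h)
    (hleib : ∀ f g h : Oring n, br f (g * h) = br f g * h + g * br f h)
    (hanti : ∀ f g : Oring n, br f g = - br g f)
    (hXX : ∀ i j u v : Fin n,
      br (Xm n i j) (Xm n u v) =
        (2⁻¹ : ℂ) • ((Xm n ^ 2) u j * kd n i v) - (2⁻¹ : ℂ) • (kd n u j * (Xm n ^ 2) i v))
    (hXZ : ∀ i j u v : Fin n,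
      br (Xm n i j) (Zm n u v) =
        (2⁻¹ : ℂ) • ((Zm n * Xm n) u j * kd n i v)
          + (2⁻¹ : ℂ) • (kd n u j * (Xm n * Zm n) i v)
          + (2⁻¹ : ℂ) • (Zm n u j * Xm n i v)
          - (2⁻¹ : ℂ) • (Xm n u j * Zm n i v))
    (a b : ℕ) :
    br (Matrix.trace (Xm n ^ a)) (Matrix.trace (Zm n * Xm n ^ b)) =
      (a : Oring n) * Matrix.trace (Zm n * Xm n ^ (a + b)) := by
  have hXtr : ∀ p r, br (Xm n ^ a).trace (Xm n p r) = 0 := fun p r => by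
    rw [hanti, neg_eq_zero]
    exact (Derivation.ofAddLeibniz _ (hadd _) (hleib _)).apply_trace_Xm_pow_eq_zero p r
      (hXX p r) a
  have hZtr : ∀ u w, br (Xm n ^ a).trace (Zm n u w) = a * (Zm n * Xm n ^ a) u w := fun u w => by
    rw [hanti, neg_eq_iff_eq_neg]
    exact (Derivation.ofAddLeibniz _ (hadd _) (hleib _)).apply_trace_Xm_pow_eq_neg_mul u w
      (fun p r => by rw [← hXZ, ← hanti]; rfl) a
  set D := Derivation.ofAddLeibniz (br (Xm n ^ a).trace) (hadd _) (hleib _)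
  have hDX : (Xm n).map D = 0 := Matrix.ext fun p r => hXtr p r
  have hDZ : (Zm n).map D = (a : Oring n) • (Zm n * Xm n ^ a) :=
    Matrix.ext fun u w => hZtr u w
  calc br (Xm n ^ a).trace (Zm n * Xm n ^ b).trace
      = ((Zm n * Xm n ^ b).map D).trace := D.apply_trace _
    _ = ((a : Oring n) • (Zm n * Xm n ^ a) * Xm n ^ b).trace := by
      simp [D.matrix_map_mul, D.matrix_map_pow, hDX, hDZ]
    _ = a * (Zm n * Xm n ^ (a + b)).trace := by
      rw [smul_mul, trace_smul, mul_assoc, ← pow_add, smul_eq_mul]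

/-- `{tr(X^a), tr(Z X^b)} = a · tr(Z X^{a+b})`. -/
theorem trace_pow_X_bracket_trace_ZX (n : ℕ) (hn : 1 ≤ n)
    (br : Oring n → Oring n → Oring n)
    (hadd : ∀ f g h : Oring n, br f (g + h) = br f g + br f h)
    (hsmul : ∀ (c : ℂ) (f g : Oring n), br f (c • g) = c • br f g)
    (hleib : ∀ f g h : Oring n, br f (g * h) = br f g * h + g * br f h)
    (hanti : ∀ f g : Oring n, br f g = - br g f)
    (hXX : ∀ i j u v : Fin n,
      br (Xm n i j) (Xm n u v) =
        (2⁻¹ : ℂ) • ((Xm n ^ 2) u j * kd n i v) - (2⁻¹ : ℂ) • (kd n u j * (Xm n ^ 2) i v))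
    (hZZ : ∀ i j u v : Fin n,
      br (Zm n i j) (Zm n u v) =
        (2⁻¹ : ℂ) • (kd n u j * (Zm n ^ 2) i v) - (2⁻¹ : ℂ) • ((Zm n ^ 2) u j * kd n i v))
    (hXZ : ∀ i j u v : Fin n,
      br (Xm n i j) (Zm n u v) =
        (2⁻¹ : ℂ) • ((Zm n * Xm n) u j * kd n i v)
          + (2⁻¹ : ℂ) • (kd n u j * (Xm n * Zm n) i v)
          + (2⁻¹ : ℂ) • (Zm n u j * Xm n i v)
          - (2⁻¹ : ℂ) • (Xm n u j * Zm n i v))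
    (a b : ℕ) :
    br (Matrix.trace (Xm n ^ a)) (Matrix.trace (Zm n * Xm n ^ b)) =
      (a : Oring n) * Matrix.trace (Zm n * Xm n ^ (a + b)) :=
  trace_pow_X_bracket_trace_ZX_general n br hadd hleib hanti hXX hXZ a b
end

section
/- Self-duality of the Ruijsenaars–Schneider phase space at the level of the bracket: let s : 𝒪ₙ → 𝒪ₙ be the ℂ-algebra automorphism determined by s(X_{ij}) = Z_{ij} and s(Z_{ij}) = X_{ij} for all i,j. Then for all f, g ∈ 𝒪ₙ one has {s(f), s(g)} = − s({f, g}); i.e., swapping X and Z changes the sign of the quasi-Poisson bracket. -/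
open Matrix Finset

/-! For fixed `f`, both `g ↦ {s f, s g}` and `g ↦ -s {f, g}` are derivations along `s`
(`D (g h) = D g · s h + s g · D h`), and both sides are antisymmetric in `(f, g)`.
Two such brackets on a polynomial ring agree as soon as they agree on pairs of variables,
and there the claim is a direct check: `s` carries the `XX`-formula to minus the `ZZ`-formula
and vice versa, and the `XZ`-formula to minus the `ZX`-formula. -/

structure IsDerivationAlong {R B A : Type*} [CommSemiring R] [Semiring B] [Algebra R B]
    [Semiring A] [Algebra R A] (φ : B →ₐ[R] A) (D : B → A) : Prop where
  map_add : ∀ f g, D (f + g) = D f + D g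
  map_smul : ∀ (c : R) f, D (c • f) = c • D f
  leibniz : ∀ f g, D (f * g) = D f * φ g + φ f * D g

namespace IsDerivationAlong

section Semiring

variable {R B A C : Type*} [CommSemiring R] [Semiring B] [Algebra R B] [Semiring A] [Algebra R A]
  [Semiring C] [Algebra R C] {φ : B →ₐ[R] A} {D : B → A}

lemma comp_algHom (hD : IsDerivationAlong φ D) (s : C →ₐ[R] B) :
    IsDerivationAlong (φ.comp s) (D ∘ s) where
  map_add f g := by simp [hD.map_add]
  map_smul c f := by simp [hD.map_smul]
  leibniz f g := by simp [hD.leibniz]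

lemma algHom_comp (hD : IsDerivationAlong φ D) (t : A →ₐ[R] C) :
    IsDerivationAlong (t.comp φ) (t ∘ D) where
  map_add f g := by simp [hD.map_add]
  map_smul c f := by simp [hD.map_smul]
  leibniz f g := by simp [hD.leibniz]

end Semiring

section Ring

variable {R B A : Type*} [CommSemiring R] [Semiring B] [Algebra R B] [Ring A] [Algebra R A]
  {φ : B →ₐ[R] A} {D : B → A}

lemma neg (hD : IsDerivationAlong φ D) : IsDerivationAlong φ (-D) where
  map_add f g := by simp [hD.map_add, add_comm]
  map_smul c f := by simp [hD.map_smul]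
  leibniz f g := by simp [hD.leibniz, add_comm]

lemma map_one (hD : IsDerivationAlong φ D) : D 1 = 0 := by
  have h := hD.leibniz 1 1
  rw [mul_one, _root_.map_one, mul_one, one_mul] at h
  simpa using h

lemma map_algebraMap (hD : IsDerivationAlong φ D) (a : R) : D (algebraMap R B a) = 0 := by
  rw [Algebra.algebraMap_eq_smul_one, hD.map_smul, hD.map_one, smul_zero]

end Ring

end IsDerivationAlong

namespace MvPolynomial

variable {σ R A : Type*} [CommSemiring R] [Ring A] [Algebra R A]
  {φ : MvPolynomial σ R →ₐ[R] A}

theorem isDerivationAlong_ext {D D' : MvPolynomial σ R → A} (hD : IsDerivationAlong φ D)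
    (hD' : IsDerivationAlong φ D') (h : ∀ i, D (X i) = D' (X i)) : D = D' := by
  funext p
  induction p using MvPolynomial.induction_on with
  | C a => rw [← algebraMap_eq, hD.map_algebraMap, hD'.map_algebraMap]
  | add p q hp hq => rw [hD.map_add, hD'.map_add, hp, hq]
  | mul_X p i hp => rw [hD.leibniz, hD'.leibniz, hp, h]

theorem bracket_ext_of_antisymm {B B' : MvPolynomial σ R → MvPolynomial σ R → A}
    (hB : ∀ f, IsDerivationAlong φ (B f)) (hB' : ∀ f, IsDerivationAlong φ (B' f))
    (hB_anti : ∀ f g, B f g = -B g f) (hB'_anti : ∀ f g, B' f g = -B' g f)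
    (h : ∀ i j, B (X i) (X j) = B' (X i) (X j)) : B = B' := by
  have hX : ∀ i, B (X i) = B' (X i) := fun i => isDerivationAlong_ext (hB _) (hB' _) (h i)
  funext f
  exact isDerivationAlong_ext (hB f) (hB' f) fun j => by
    rw [hB_anti, hB'_anti, hX]

end MvPolynomial

theorem map_matrix_mul_apply {F α β l m o : Type*} [Fintype m] [Semiring α] [Semiring β]
    [FunLike F α β] [RingHomClass F α β] (f : F) (M : Matrix l m α) (N : Matrix m o α)
    (i : l) (j : o) : f ((M * N) i j) = (M.map f * N.map f) i j := by
  rw [← Matrix.map_mul]; rfl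

section Swap

variable {n : ℕ}

lemma map_kd (s : Oring n →ₐ[ℂ] Oring n) (i j : Fin n) : s (kd n i j) = kd n i j := by
  unfold kd; split <;> simp

lemma map_Xm {s : Oring n →ₐ[ℂ] Oring n} (hsX : ∀ i j : Fin n, s (Xm n i j) = Zm n i j) :
    (Xm n).map s = Zm n :=
  Matrix.ext hsX

lemma map_Zm {s : Oring n →ₐ[ℂ] Oring n} (hsZ : ∀ i j : Fin n, s (Zm n i j) = Xm n i j) :
    (Zm n).map s = Xm n :=
  Matrix.ext hsZ

lemma swap_X_Z_antiPoisson_generators (br : Oring n → Oring n → Oring n)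
    (hanti : ∀ f g : Oring n, br f g = - br g f)
    (hXX : ∀ i j u v : Fin n,
      br (Xm n i j) (Xm n u v) =
        (2⁻¹ : ℂ) • ((Xm n ^ 2) u j * kd n i v) - (2⁻¹ : ℂ) • (kd n u j * (Xm n ^ 2) i v))
    (hZZ : ∀ i j u v : Fin n,
      br (Zm n i j) (Zm n u v) =
        (2⁻¹ : ℂ) • (kd n u j * (Zm n ^ 2) i v) - (2⁻¹ : ℂ) • ((Zm n ^ 2) u j * kd n i v))
    (hXZ : ∀ i j u v : Fin n,
      br (Xm n i j) (Zm n u v) =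
        (2⁻¹ : ℂ) • ((Zm n * Xm n) u j * kd n i v)
          + (2⁻¹ : ℂ) • (kd n u j * (Xm n * Zm n) i v)
          + (2⁻¹ : ℂ) • (Zm n u j * Xm n i v)
          - (2⁻¹ : ℂ) • (Xm n u j * Zm n i v))
    {s : Oring n →ₐ[ℂ] Oring n}
    (hsX : ∀ i j : Fin n, s (Xm n i j) = Zm n i j)
    (hsZ : ∀ i j : Fin n, s (Zm n i j) = Xm n i j) (a b : (Fin n × Fin n) ⊕ (Fin n × Fin n)) :
    br (s (MvPolynomial.X a)) (s (MvPolynomial.X b)) =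
      -s (br (MvPolynomial.X a) (MvPolynomial.X b)) := by
  have hZX : ∀ i j u v, br (Zm n i j) (Xm n u v) = -s (br (Xm n i j) (Zm n u v)) := by
    intro i j u v
    rw [hanti, hXZ, hXZ]
    simp only [map_sub, map_add, map_smul, map_mul, map_kd, map_matrix_mul_apply, map_Xm hsX,
      map_Zm hsZ, hsX, hsZ]
    simp only [Algebra.smul_def]
    ring
  rcases a with ⟨i, j⟩ | ⟨i, j⟩ <;> rcases b with ⟨u, v⟩ | ⟨u, v⟩
  · change br (s (Xm n i j)) (s (Xm n u v)) = -s (br (Xm n i j) (Xm n u v))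
    rw [hsX, hsX, hZZ, hXX]
    simp only [pow_two, map_sub, map_smul, map_mul, map_kd, map_matrix_mul_apply, map_Xm hsX,
      neg_sub]
  · change br (s (Xm n i j)) (s (Zm n u v)) = -s (br (Xm n i j) (Zm n u v))
    rw [hsX, hsZ, hZX]
  · change br (s (Zm n i j)) (s (Xm n u v)) = -s (br (Zm n i j) (Xm n u v))
    rw [hsZ, hsX, hanti, hZX, hanti (Zm n i j), map_neg]
  · change br (s (Zm n i j)) (s (Zm n u v)) = -s (br (Zm n i j) (Zm n u v))
    rw [hsZ, hsZ, hXX, hZZ]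
    simp only [pow_two, map_sub, map_smul, map_mul, map_kd, map_matrix_mul_apply, map_Zm hsZ,
      neg_sub]

end Swap

theorem swap_X_Z_antiPoisson_general (n : ℕ)
    (br : Oring n → Oring n → Oring n)
    (hadd : ∀ f g h : Oring n, br f (g + h) = br f g + br f h)
    (hsmul : ∀ (c : ℂ) (f g : Oring n), br f (c • g) = c • br f g)
    (hleib : ∀ f g h : Oring n, br f (g * h) = br f g * h + g * br f h)
    (hanti : ∀ f g : Oring n, br f g = - br g f)
    (hXX : ∀ i j u v : Fin n,
      br (Xm n i j) (Xm n u v) =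
        (2⁻¹ : ℂ) • ((Xm n ^ 2) u j * kd n i v) - (2⁻¹ : ℂ) • (kd n u j * (Xm n ^ 2) i v))
    (hZZ : ∀ i j u v : Fin n,
      br (Zm n i j) (Zm n u v) =
        (2⁻¹ : ℂ) • (kd n u j * (Zm n ^ 2) i v) - (2⁻¹ : ℂ) • ((Zm n ^ 2) u j * kd n i v))
    (hXZ : ∀ i j u v : Fin n,
      br (Xm n i j) (Zm n u v) =
        (2⁻¹ : ℂ) • ((Zm n * Xm n) u j * kd n i v)
          + (2⁻¹ : ℂ) • (kd n u j * (Xm n * Zm n) i v)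
          + (2⁻¹ : ℂ) • (Zm n u j * Xm n i v)
          - (2⁻¹ : ℂ) • (Xm n u j * Zm n i v))
    (s : Oring n →ₐ[ℂ] Oring n)
    (hsX : ∀ i j : Fin n, s (Xm n i j) = Zm n i j)
    (hsZ : ∀ i j : Fin n, s (Zm n i j) = Xm n i j) :
    ∀ f g : Oring n, br (s f) (s g) = - s (br f g) := by
  have hbr : ∀ f, IsDerivationAlong (AlgHom.id ℂ (Oring n)) (br f) := fun f =>
    ⟨hadd f, fun c => hsmul c f, hleib f⟩
  have hswapped : ∀ f, IsDerivationAlong s fun g => br (s f) (s g) := fun f =>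
    AlgHom.id_comp s ▸ (hbr (s f)).comp_algHom s
  have hnegated : ∀ f, IsDerivationAlong s fun g => -s (br f g) := fun f =>
    AlgHom.comp_id s ▸ ((hbr f).algHom_comp s).neg
  have key : (fun f g => br (s f) (s g)) = fun f g => -s (br f g) :=
    MvPolynomial.bracket_ext_of_antisymm hswapped hnegated
      (fun f g => hanti _ _) (fun f g => by rw [hanti, map_neg, neg_neg])
      (swap_X_Z_antiPoisson_generators br hanti hXX hZZ hXZ hsX hsZ)
  exact fun f g => congrFun₂ key f g

/-- swapping `X` and `Z` changes the sign of the quasi-Poisson bracket. -/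
theorem swap_X_Z_antiPoisson (n : ℕ) (hn : 1 ≤ n)
    (br : Oring n → Oring n → Oring n)
    (hadd : ∀ f g h : Oring n, br f (g + h) = br f g + br f h)
    (hsmul : ∀ (c : ℂ) (f g : Oring n), br f (c • g) = c • br f g)
    (hleib : ∀ f g h : Oring n, br f (g * h) = br f g * h + g * br f h)
    (hanti : ∀ f g : Oring n, br f g = - br g f)
    (hXX : ∀ i j u v : Fin n,
      br (Xm n i j) (Xm n u v) =
        (2⁻¹ : ℂ) • ((Xm n ^ 2) u j * kd n i v) - (2⁻¹ : ℂ) • (kd n u j * (Xm n ^ 2) i v))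
    (hZZ : ∀ i j u v : Fin n,
      br (Zm n i j) (Zm n u v) =
        (2⁻¹ : ℂ) • (kd n u j * (Zm n ^ 2) i v) - (2⁻¹ : ℂ) • ((Zm n ^ 2) u j * kd n i v))
    (hXZ : ∀ i j u v : Fin n,
      br (Xm n i j) (Zm n u v) =
        (2⁻¹ : ℂ) • ((Zm n * Xm n) u j * kd n i v)
          + (2⁻¹ : ℂ) • (kd n u j * (Xm n * Zm n) i v)
          + (2⁻¹ : ℂ) • (Zm n u j * Xm n i v)
          - (2⁻¹ : ℂ) • (Xm n u j * Zm n i v))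
    (s : Oring n →ₐ[ℂ] Oring n)
    (hsX : ∀ i j : Fin n, s (Xm n i j) = Zm n i j)
    (hsZ : ∀ i j : Fin n, s (Zm n i j) = Xm n i j) :
    ∀ f g : Oring n, br (s f) (s g) = - s (br f g) :=
  swap_X_Z_antiPoisson_general n br hadd hsmul hleib hanti hXX hZZ hXZ s hsX hsZ
end

section
/- Under the stated genericity assumptions, the matrix XZ − q·ZX has entries (XZ − q·ZX)_{ij} = (1−q)·ν_j·x_j for all i, j; consequently XZ − q·ZX has rank at most 1, and (assuming moreover that Z is invertible) the matrix X·Z·X^{−1}·Z^{−1} − q·Idₙ has rank at most 1. -/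
/-!
Clearing denominators, `Z_{ij} = (q−1)ν_j x_j / (q x_j − x_i)`, while the `q`-commutator
`XZ − qZX` multiplies `Z_{ij}` by `x_i − q x_j`. The two factors cancel, leaving an entry that
does not depend on `i`: all rows of `XZ − qZX` coincide, so it has rank at most one. Finally
`XZX⁻¹Z⁻¹ − q = (XZ − qZX)·X⁻¹Z⁻¹` differs from it by an invertible factor.
-/

open Matrix Finset

/-- The Ruijsenaars–Schneider Lax matrix `Z` with entries
`Z_{ij} = (q−1)ν_j/(q − x_i x_j⁻¹)`. -/
noncomputable def RSLax (n : ℕ) (q : ℂ) (x ν : Fin n → ℂ) : Matrix (Fin n) (Fin n) ℂ :=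
  Matrix.of fun i j => ((q - 1) * ν j) / (q - x i * (x j)⁻¹)

namespace Matrix

theorem rank_le_one_of_apply_eq {m n R : Type*} [Fintype n] [CommRing R] [StrongRankCondition R]
    {M : Matrix m n R} {v : n → R} (hM : ∀ i j, M i j = v j) : M.rank ≤ 1 := by
  have hrows : M = vecMulVec (fun _ => 1) v := by
    ext i j
    rw [hM, vecMulVec_apply, one_mul]
  exact hrows ▸ rank_vecMulVec_le _ _

variable {ι R : Type*} [Fintype ι] [DecidableEq ι] [CommRing R]

theorem diagonal_mul_sub_smul_mul_diagonal_apply (d : ι → R) (q : R) (A : Matrix ι ι R)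
    (i j : ι) : (diagonal d * A - q • (A * diagonal d)) i j = (d i - q * d j) * A i j := by
  simp only [sub_apply, smul_apply, diagonal_mul, mul_diagonal, smul_eq_mul]
  ring

theorem rank_mul_mul_inv_mul_inv_sub_smul_one {A B : Matrix ι ι R} (hA : IsUnit A)
    (hB : IsUnit B) (q : R) :
    (A * B * A⁻¹ * B⁻¹ - q • 1).rank = (A * B - q • (B * A)).rank := by
  have hBA : B * A * (A⁻¹ * B⁻¹) = 1 := by
    rw [Matrix.mul_assoc, ← Matrix.mul_assoc A,
      mul_nonsing_inv _ ((isUnit_iff_isUnit_det A).mp hA), Matrix.one_mul,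
      mul_nonsing_inv _ ((isUnit_iff_isUnit_det B).mp hB)]
  have hfactor :
      A * B * A⁻¹ * B⁻¹ - q • 1 = (A * B - q • (B * A)) * (A⁻¹ * B⁻¹) := by
    rw [sub_mul, smul_mul, hBA, Matrix.mul_assoc, Matrix.mul_assoc]
  rw [hfactor, rank_mul_eq_left_of_isUnit_det _ _ ((isUnit_iff_isUnit_det _).mp
    ((isUnit_nonsing_inv_iff.mpr hA).mul (isUnit_nonsing_inv_iff.mpr hB)))]

end Matrix

theorem RSLax_q_commutator_apply {n : ℕ} {q : ℂ} {x : Fin n → ℂ} (ν : Fin n → ℂ)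
    (hx : ∀ i, x i ≠ 0) (hqx : ∀ i j, x i ≠ q * x j) (i j : Fin n) :
    (diagonal x * RSLax n q x ν - q • (RSLax n q x ν * diagonal x)) i j
      = (1 - q) * ν j * x j := by
  have hden : q * x j - x i ≠ 0 := sub_ne_zero.mpr (hqx i j).symm
  have hZ : RSLax n q x ν i j = (q - 1) * ν j * x j / (q * x j - x i) := by
    rw [RSLax, of_apply, eq_div_iff hden]
    field_simp [hx j]
  rw [diagonal_mul_sub_smul_mul_diagonal_apply, hZ]
  field_simp
  ring

theorem RSLax_rank_one_condition_general (n : ℕ) (q : ℂ)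
    (x ν : Fin n → ℂ) (hx : ∀ i, x i ≠ 0)
    (hqx : ∀ i j, x i ≠ q * x j) :
    (∀ i j, (Matrix.diagonal x * RSLax n q x ν - q • (RSLax n q x ν * Matrix.diagonal x)) i j
        = (1 - q) * ν j * x j) ∧
    (Matrix.diagonal x * RSLax n q x ν - q • (RSLax n q x ν * Matrix.diagonal x)).rank ≤ 1 ∧
    (IsUnit (RSLax n q x ν) →
      (Matrix.diagonal x * RSLax n q x ν * (Matrix.diagonal x)⁻¹ * (RSLax n q x ν)⁻¹
          - q • (1 : Matrix (Fin n) (Fin n) ℂ)).rank ≤ 1) := by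
  have hentry := RSLax_q_commutator_apply ν hx hqx
  have hrank := rank_le_one_of_apply_eq hentry
  refine ⟨hentry, hrank, fun hZ => ?_⟩
  have hX : IsUnit (diagonal x) := isUnit_diagonal.mpr (Pi.isUnit_iff.mpr fun i => (hx i).isUnit)
  exact (rank_mul_mul_inv_mul_inv_sub_smul_one hX hZ q).trans_le hrank

/-- `(XZ − q·ZX)_{ij} = (1−q)·ν_j·x_j`, hence `XZ − q·ZX` has rank at most `1`,
and if moreover `Z` is invertible then `X·Z·X⁻¹·Z⁻¹ − q·Idₙ` has rank at most `1`. -/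
theorem RSLax_rank_one_condition (n : ℕ) (hn : 1 ≤ n) (q : ℂ) (hq : q ≠ 0)
    (x ν : Fin n → ℂ) (hx : ∀ i, x i ≠ 0) (hν : ∀ i, ν i ≠ 0)
    (hxx : ∀ i j, i ≠ j → x i ≠ x j) (hqx : ∀ i j, x i ≠ q * x j) :
    (∀ i j, (Matrix.diagonal x * RSLax n q x ν - q • (RSLax n q x ν * Matrix.diagonal x)) i j
        = (1 - q) * ν j * x j) ∧
    (Matrix.diagonal x * RSLax n q x ν - q • (RSLax n q x ν * Matrix.diagonal x)).rank ≤ 1 ∧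
    (IsUnit (RSLax n q x ν) →
      (Matrix.diagonal x * RSLax n q x ν * (Matrix.diagonal x)⁻¹ * (RSLax n q x ν)⁻¹
          - q • (1 : Matrix (Fin n) (Fin n) ℂ)).rank ≤ 1) :=
  RSLax_rank_one_condition_general n q x ν hx hqx
end

section
/- For all integers a > b ≥ 0 the following identity of complex numbers holds: Σ_{i≠j} (1−q)²(x_i+x_j) ν_i ν_j x_i^a x_j^b / ((x_i−x_j)(x_i x_j^{−1} − q)(x_j x_i^{−1} − q)) = Σ_{i≠j} (q−1)² ν_i ν_j / ((q − x_i x_j^{−1})(q − x_j x_i^{−1})) · Σ_{r=b+1}^{a} x_j^r x_i^{a+b−r}, where both double sums run over ordered pairs (i,j) with 1 ≤ i, j ≤ n and i ≠ j. -/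
/-!
Both summands carry the factor `(1 - q)² νᵢ νⱼ / ((xᵢ/xⱼ - q)(xⱼ/xᵢ - q))`, which is symmetric in
`i, j`, so it suffices to match the two sides pair by pair, `(i, j)` together with `(j, i)`. For a
pair the identity reduces to the polynomial identity
`(X + Y)(XᵃYᵇ - YᵃXᵇ) = (X - Y)(S(X, Y) + S(Y, X))`, `S(X, Y) = ∑_{r=b+1}^{a} Yʳ X^(a+b-r)`,
which is two geometric sums, `(X - Y) S(X, Y) = XᵃY^(b+1) - XᵇY^(a+1)`.
-/

open Finset

section OffDiagonal

variable {ι M : Type*} [Fintype ι] [DecidableEq ι]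

theorem sum_sum_sdiff_singleton_eq_zero_of_antisymm [AddCommMonoid M] (f : ι → ι → M)
    (hf : ∀ i j, i ≠ j → f i j + f j i = 0) :
    ∑ i, ∑ j ∈ univ \ {i}, f i j = 0 := by
  rw [← sum_finset_product' univ.offDiag _ _ (by simp [eq_comm])]
  refine sum_involution (fun p _ ↦ p.swap) (fun p hp ↦ hf _ _ (mem_offDiag.1 hp).2.2)
    (fun p hp _ h ↦ (mem_offDiag.1 hp).2.2 (congrArg Prod.snd h)) (fun p hp ↦ ?_)
    (fun p _ ↦ p.swap_swap)
  simpa [and_comm, eq_comm] using hp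

theorem sum_sum_sdiff_singleton_eq_of_add_swap [AddCommGroup M] (f g : ι → ι → M)
    (hfg : ∀ i j, i ≠ j → f i j + f j i = g i j + g j i) :
    ∑ i, ∑ j ∈ univ \ {i}, f i j = ∑ i, ∑ j ∈ univ \ {i}, g i j := by
  rw [← sub_eq_zero, ← sum_sub_distrib]
  simp_rw [← sum_sub_distrib]
  refine sum_sum_sdiff_singleton_eq_zero_of_antisymm (fun i j ↦ f i j - g i j) fun i j hij ↦ ?_
  rw [sub_add_sub_comm, hfg i j hij, sub_self]

end OffDiagonal

theorem sub_mul_sum_Icc_pow_mul_pow {R : Type*} [CommRing R] (X Y : R) {a b : ℕ} (hab : b ≤ a) :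
    (X - Y) * ∑ r ∈ Icc (b + 1) a, Y ^ r * X ^ (a + b - r) =
      X ^ a * Y ^ (b + 1) - X ^ b * Y ^ (a + 1) := by
  induction a, hab using Nat.le_induction with
  | base => simp
  | succ a hba ih =>
    have hshift : ∑ r ∈ Icc (b + 1) a, Y ^ r * X ^ (a + 1 + b - r) =
        X * ∑ r ∈ Icc (b + 1) a, Y ^ r * X ^ (a + b - r) := by
      rw [mul_sum]
      refine sum_congr rfl fun r hr ↦ ?_
      rw [show a + 1 + b - r = a + b - r + 1 by grind, pow_succ]
      ring
    rw [sum_Icc_succ_top (by omega), hshift, show a + 1 + b - (a + 1) = b by omega]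
    linear_combination X * ih

theorem add_mul_pow_sub_pow_eq_sub_mul_sum_Icc {R : Type*} [CommRing R] (X Y : R) {a b : ℕ}
    (hab : b ≤ a) :
    (X + Y) * (X ^ a * Y ^ b - Y ^ a * X ^ b) =
      (X - Y) * (∑ r ∈ Icc (b + 1) a, Y ^ r * X ^ (a + b - r) +
        ∑ r ∈ Icc (b + 1) a, X ^ r * Y ^ (a + b - r)) := by
  linear_combination sub_mul_sum_Icc_pow_mul_pow Y X hab - sub_mul_sum_Icc_pow_mul_pow X Y hab

theorem double_sum_summands_add_swap {K : Type*} [Field K] (q u v : K) {X Y : K} (hXY : X ≠ Y)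
    {a b : ℕ} (hab : b ≤ a) :
    (1 - q) ^ 2 * (X + Y) * u * v * X ^ a * Y ^ b / ((X - Y) * (X * Y⁻¹ - q) * (Y * X⁻¹ - q)) +
      (1 - q) ^ 2 * (Y + X) * v * u * Y ^ a * X ^ b / ((Y - X) * (Y * X⁻¹ - q) * (X * Y⁻¹ - q)) =
    (q - 1) ^ 2 * u * v / ((q - X * Y⁻¹) * (q - Y * X⁻¹)) *
        ∑ r ∈ Icc (b + 1) a, Y ^ r * X ^ (a + b - r) +
      (q - 1) ^ 2 * v * u / ((q - Y * X⁻¹) * (q - X * Y⁻¹)) *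
        ∑ r ∈ Icc (b + 1) a, X ^ r * Y ^ (a + b - r) := by
  rw [← neg_sub X Y, ← neg_sub (X * Y⁻¹) q, ← neg_sub (Y * X⁻¹) q]
  generalize X * Y⁻¹ - q = A, Y * X⁻¹ - q = B
  have hcancel : (X - Y) * (X - Y)⁻¹ = 1 := mul_inv_cancel₀ (sub_ne_zero.2 hXY)
  simp only [div_eq_mul_inv, mul_inv, inv_neg]
  linear_combination
    (1 - q) ^ 2 * u * v * A⁻¹ * B⁻¹ * (X - Y)⁻¹ * add_mul_pow_sub_pow_eq_sub_mul_sum_Icc X Y hab +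
      (1 - q) ^ 2 * u * v * A⁻¹ * B⁻¹ * (∑ r ∈ Icc (b + 1) a, Y ^ r * X ^ (a + b - r) +
        ∑ r ∈ Icc (b + 1) a, X ^ r * Y ^ (a + b - r)) * hcancel

theorem double_sum_identity_general (n : ℕ) (q : ℂ)
    (x : Fin n → ℂ) (ν : Fin n → ℂ)
    (hxx : ∀ i j, i ≠ j → x i ≠ x j)
    (a b : ℕ) (hab : b < a) :
    (∑ i : Fin n, ∑ j ∈ Finset.univ \ {i},
        ((1 - q) ^ 2 * (x i + x j) * ν i * ν j * x i ^ a * x j ^ b) /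
          ((x i - x j) * (x i * (x j)⁻¹ - q) * (x j * (x i)⁻¹ - q))) =
      ∑ i : Fin n, ∑ j ∈ Finset.univ \ {i},
        ((q - 1) ^ 2 * ν i * ν j) / ((q - x i * (x j)⁻¹) * (q - x j * (x i)⁻¹)) *
          ∑ r ∈ Finset.Icc (b + 1) a, x j ^ r * x i ^ (a + b - r) :=
  sum_sum_sdiff_singleton_eq_of_add_swap _ _ fun i j hij ↦
    double_sum_summands_add_swap q (ν i) (ν j) (hxx i j hij) hab.le

/-- identity between the two double sums appearing in the proof
that the map to the Ruijsenaars–Schneider phase space is Poisson. -/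
theorem double_sum_identity (n : ℕ) (hn : 1 ≤ n) (q : ℂ) (hq : q ≠ 0)
    (x : Fin n → ℂ) (ν : Fin n → ℂ) (hx : ∀ i, x i ≠ 0)
    (hxx : ∀ i j, i ≠ j → x i ≠ x j) (hqx : ∀ i j, x i ≠ q * x j)
    (a b : ℕ) (hab : b < a) :
    (∑ i : Fin n, ∑ j ∈ Finset.univ \ {i},
        ((1 - q) ^ 2 * (x i + x j) * ν i * ν j * x i ^ a * x j ^ b) /
          ((x i - x j) * (x i * (x j)⁻¹ - q) * (x j * (x i)⁻¹ - q))) =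
      ∑ i : Fin n, ∑ j ∈ Finset.univ \ {i},
        ((q - 1) ^ 2 * ν i * ν j) / ((q - x i * (x j)⁻¹) * (q - x j * (x i)⁻¹)) *
          ∑ r ∈ Finset.Icc (b + 1) a, x j ^ r * x i ^ (a + b - r) :=
  double_sum_identity_general n q x ν hxx a b hab
end

section
/- The functions σ_i(x,ν) = ν_i · Π_{j≠i} (1 − x_i x_j^{−1})/(1 − q x_i x_j^{−1}) on U satisfy {x_i, σ_j}' = δ_{ij} x_i σ_j and {σ_i, σ_j}' = 0 for all i, j; that is, (x₁,…,xₙ, σ₁,…,σₙ) are log-canonical (Darboux) coordinates for the bracket {−,−}'. -/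
open Finset

/-- Partial derivative of `F : (x, ν) ↦ F(x, ν)` with respect to `x_k` at the point `p`. -/
noncomputable def pderX (n : ℕ) (F : (Fin n → ℂ) × (Fin n → ℂ) → ℂ) (k : Fin n)
    (p : (Fin n → ℂ) × (Fin n → ℂ)) : ℂ :=
  deriv (fun s : ℂ => F (Function.update p.1 k s, p.2)) (p.1 k)

/-- Partial derivative of `F : (x, ν) ↦ F(x, ν)` with respect to `ν_k` at the point `p`. -/
noncomputable def pderN (n : ℕ) (F : (Fin n → ℂ) × (Fin n → ℂ) → ℂ) (k : Fin n)
    (p : (Fin n → ℂ) × (Fin n → ℂ)) : ℂ :=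
  deriv (fun s : ℂ => F (p.1, Function.update p.2 k s)) (p.2 k)

/-- The Poisson bracket `{F, G}'` of Proposition 3.7:
`{F,G}' = Σ_k x_k ν_k (∂F/∂x_k ∂G/∂ν_k − ∂G/∂x_k ∂F/∂ν_k) + Σ_{k≠l} π_{kl} ∂F/∂ν_k ∂G/∂ν_l`
with `π_{kl} = (1−q)²(x_k+x_l) x_k x_l ν_k ν_l/((x_k−x_l)(x_k−q x_l)(x_l−q x_k))`. -/
noncomputable def rsBracket (n : ℕ) (q : ℂ) (F G : (Fin n → ℂ) × (Fin n → ℂ) → ℂ)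
    (p : (Fin n → ℂ) × (Fin n → ℂ)) : ℂ :=
  (∑ k : Fin n, p.1 k * p.2 k *
      (pderX n F k p * pderN n G k p - pderX n G k p * pderN n F k p)) +
    ∑ k : Fin n, ∑ l ∈ Finset.univ \ {k},
      ((1 - q) ^ 2 * (p.1 k + p.1 l) * p.1 k * p.1 l * p.2 k * p.2 l) /
          ((p.1 k - p.1 l) * (p.1 k - q * p.1 l) * (p.1 l - q * p.1 k)) *
        pderN n F k p * pderN n G l p

/-- The function `σ_i(x, ν) = ν_i · Π_{j≠i} (1 − x_i x_j⁻¹)/(1 − q x_i x_j⁻¹)`. -/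
noncomputable def sigmaF (n : ℕ) (q : ℂ) (i : Fin n)
    (p : (Fin n → ℂ) × (Fin n → ℂ)) : ℂ :=
  p.2 i * ∏ j ∈ Finset.univ \ {i}, (1 - p.1 i * (p.1 j)⁻¹) / (1 - q * p.1 i * (p.1 j)⁻¹)

section Aux
variable (n : ℕ) (q : ℂ)
/-!
Only the coordinate `ν_i` enters `σ_i`, and linearly, so every bracket collapses to at most three
terms: two from the symplectic part and one coefficient `π_{ij}` of the second sum. Writing
`a = x_i`, `b = x_j`, the three terms of `{σ_i, σ_j}'` are, up to the common factor
`a b ν_i ν_j (1 - q) / ((a - q b)(b - q a))` and the products over the remaining indices,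
`(a - b)/(b - q a)`, `(a - b)/(a - q b)` and `-(1 - q)(a + b)(a - b)/((a - q b)(b - q a))`,
which sum to zero.
-/

/-- The coefficient `π_{kl}` of the bracket `{-,-}'`. -/
noncomputable def rsCoeff {n : ℕ} (q : ℂ) (p : (Fin n → ℂ) × (Fin n → ℂ)) (k l : Fin n) : ℂ :=
  ((1 - q) ^ 2 * (p.1 k + p.1 l) * p.1 k * p.1 l * p.2 k * p.2 l) /
    ((p.1 k - p.1 l) * (p.1 k - q * p.1 l) * (p.1 l - q * p.1 k))

/-- The factor `(1 - a b⁻¹)/(1 - q a b⁻¹)` of `σ_i`, with `a = x_i` and `b = x_j`. -/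
noncomputable def sigmaFactor (q a b : ℂ) : ℂ :=
  (1 - a * b⁻¹) / (1 - q * a * b⁻¹)

noncomputable def sigmaProd {n : ℕ} (q : ℂ) (x : Fin n → ℂ) (i : Fin n) : ℂ :=
  ∏ j ∈ univ \ {i}, sigmaFactor q (x i) (x j)

section

variable {n : ℕ} (q : ℂ)

theorem sigmaF_eq (i : Fin n) (p : (Fin n → ℂ) × (Fin n → ℂ)) :
    sigmaF n q i p = p.2 i * sigmaProd q p.1 i :=
  rfl

theorem sigmaFactor_eq {a b : ℂ} (hb : b ≠ 0) :
    sigmaFactor q a b = (b - a) / (b - q * a) := by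
  have hsub : ∀ c, 1 - c * b⁻¹ = (b - c) / b := fun c => by field_simp
  rw [sigmaFactor, hsub, hsub, div_div_div_cancel_right₀ hb]

theorem hasDerivAt_sigmaFactor (a : ℂ) {b : ℂ} (hb : b ≠ 0) (hqb : b ≠ q * a) :
    HasDerivAt (sigmaFactor q a) (a * (1 - q) / (b - q * a) ^ 2) b := by
  have hderiv : HasDerivAt (fun s => (s - a) / (s - q * a)) (a * (1 - q) / (b - q * a) ^ 2) b :=
    (((hasDerivAt_id' b).sub_const a).fun_div ((hasDerivAt_id' b).sub_const (q * a))
      (sub_ne_zero.mpr hqb)).congr_deriv (by ring)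
  refine hderiv.congr_of_eventuallyEq ?_
  filter_upwards [isOpen_ne.mem_nhds hb] with s hs
  exact sigmaFactor_eq q hs

theorem sigmaProd_eq_mul_prod_erase (x : Fin n → ℂ) {i k : Fin n} (hki : k ≠ i) :
    sigmaProd q x i =
      sigmaFactor q (x i) (x k) * ∏ j ∈ (univ \ {i}).erase k, sigmaFactor q (x i) (x j) :=
  (mul_prod_erase _ _ (by simpa using hki)).symm

theorem pderX_coord (i k : Fin n) (p : (Fin n → ℂ) × (Fin n → ℂ)) :
    pderX n (fun p' => p'.1 i) k p = if k = i then 1 else 0 := by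
  rcases eq_or_ne k i with rfl | hki
  · simp [pderX]
  · simp [pderX, Function.update_of_ne hki.symm, hki]

theorem pderN_coord (i k : Fin n) (p : (Fin n → ℂ) × (Fin n → ℂ)) :
    pderN n (fun p' => p'.1 i) k p = 0 := by
  simp [pderN]

theorem pderN_sigmaF_self (i : Fin n) (p : (Fin n → ℂ) × (Fin n → ℂ)) :
    pderN n (sigmaF n q i) i p = sigmaProd q p.1 i := by
  simp only [pderN, sigmaF_eq, Function.update_self]
  exact ((hasDerivAt_id _).mul_const _).deriv.trans (one_mul _)

theorem pderN_sigmaF_of_ne {i k : Fin n} (hki : k ≠ i) (p : (Fin n → ℂ) × (Fin n → ℂ)) :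
    pderN n (sigmaF n q i) k p = 0 := by
  simp [pderN, sigmaF_eq, Function.update_of_ne hki.symm]

theorem pderX_sigmaF_of_ne {i k : Fin n} (hki : k ≠ i) (p : (Fin n → ℂ) × (Fin n → ℂ))
    (hxk : p.1 k ≠ 0) (hqx : p.1 k ≠ q * p.1 i) :
    pderX n (sigmaF n q i) k p =
      p.2 i * (p.1 i * (1 - q) / (p.1 k - q * p.1 i) ^ 2 *
        ∏ j ∈ (univ \ {i}).erase k, sigmaFactor q (p.1 i) (p.1 j)) := by
  have hslice : (fun s => sigmaF n q i (Function.update p.1 k s, p.2)) = fun s =>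
      p.2 i * (sigmaFactor q (p.1 i) s *
        ∏ j ∈ (univ \ {i}).erase k, sigmaFactor q (p.1 i) (p.1 j)) := by
    funext s
    rw [sigmaF_eq, sigmaProd_eq_mul_prod_erase q _ hki]
    dsimp only
    rw [Function.update_of_ne hki.symm, Function.update_self]
    refine congrArg _ (congrArg _ (prod_congr rfl fun j hj => ?_))
    rw [Function.update_of_ne (ne_of_mem_erase hj)]
  rw [pderX, hslice]
  exact (((hasDerivAt_sigmaFactor q _ hxk hqx).mul_const _).const_mul _).deriv

theorem rsBracket_of_pderN_eq_zero {F G : (Fin n → ℂ) × (Fin n → ℂ) → ℂ} {i j : Fin n}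
    (p : (Fin n → ℂ) × (Fin n → ℂ))
    (hF : ∀ k, k ≠ i → pderN n F k p = 0) (hG : ∀ l, l ≠ j → pderN n G l p = 0) :
    rsBracket n q F G p =
      p.1 j * p.2 j * pderX n F j p * pderN n G j p -
        p.1 i * p.2 i * pderX n G i p * pderN n F i p +
      if i = j then 0 else rsCoeff q p i j * pderN n F i p * pderN n G j p := by
  have hsymplectic :
      ∑ k, p.1 k * p.2 k * (pderX n F k p * pderN n G k p - pderX n G k p * pderN n F k p) =
        p.1 j * p.2 j * pderX n F j p * pderN n G j p -
          p.1 i * p.2 i * pderX n G i p * pderN n F i p := by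
    simp only [mul_sub, sum_sub_distrib]
    rw [sum_eq_single j (fun k _ hk => by simp [hG k hk]) (by simp),
      sum_eq_single i (fun k _ hk => by simp [hF k hk]) (by simp)]
    ring
  have hcoeff : ∑ k, ∑ l ∈ univ \ {k}, rsCoeff q p k l * pderN n F k p * pderN n G l p =
      if i = j then 0 else rsCoeff q p i j * pderN n F i p * pderN n G j p := by
    rw [sum_eq_single i (fun k _ hk => sum_eq_zero fun l _ => by simp [hF k hk]) (by simp)]
    split_ifs with hij
    · exact sum_eq_zero fun l hl => by
        simp [hG l (by simpa [hij] using (mem_sdiff.mp hl).2)]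
    · exact sum_eq_single_of_mem j (by simpa [eq_comm] using hij)
        fun l _ hl => by simp [hG l hl]
  rw [rsBracket, hsymplectic]
  exact congrArg _ hcoeff

theorem rsBracket_coord_sigmaF (i j : Fin n) (p : (Fin n → ℂ) × (Fin n → ℂ)) :
    rsBracket n q (fun p' => p'.1 i) (sigmaF n q j) p =
      (if i = j then 1 else 0) * p.1 i * sigmaF n q j p := by
  rw [rsBracket_of_pderN_eq_zero q p (i := i) (fun k _ => pderN_coord i k p)
    (fun l hl => pderN_sigmaF_of_ne q hl p)]
  simp only [pderN_coord, pderX_coord, pderN_sigmaF_self, sigmaF_eq]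
  rcases eq_or_ne i j with rfl | hij
  · simp only [if_true]; ring
  · simp [hij, Ne.symm hij]

theorem rsBracket_sigmaF_self (i : Fin n) (p : (Fin n → ℂ) × (Fin n → ℂ)) :
    rsBracket n q (sigmaF n q i) (sigmaF n q i) p = 0 := by
  rw [rsBracket_of_pderN_eq_zero q p (fun k hk => pderN_sigmaF_of_ne q hk p)
    (fun l hl => pderN_sigmaF_of_ne q hl p), if_pos rfl]
  ring

theorem log_canonical_identity {a b : ℂ} (u v R S : ℂ) (hab : a ≠ b)
    (haqb : a ≠ q * b) (hbqa : b ≠ q * a) :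
    b * v * (u * (a * (1 - q) / (b - q * a) ^ 2 * R)) * ((a - b) / (a - q * b) * S) -
        a * u * (v * (b * (1 - q) / (a - q * b) ^ 2 * S)) * ((b - a) / (b - q * a) * R) +
      (1 - q) ^ 2 * (a + b) * a * b * u * v / ((a - b) * (a - q * b) * (b - q * a)) *
        ((b - a) / (b - q * a) * R) * ((a - b) / (a - q * b) * S) = 0 := by
  have hab' : a - b ≠ 0 := sub_ne_zero.mpr hab
  have haqb' : a - q * b ≠ 0 := sub_ne_zero.mpr haqb
  have hbqa' : b - q * a ≠ 0 := sub_ne_zero.mpr hbqa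
  field_simp
  ring

theorem rsBracket_sigmaF_of_ne {i j : Fin n} (hij : i ≠ j) (p : (Fin n → ℂ) × (Fin n → ℂ))
    (hx : ∀ k, p.1 k ≠ 0) (hxx : ∀ k l, k ≠ l → p.1 k ≠ p.1 l)
    (hqx : ∀ k l, k ≠ l → p.1 k ≠ q * p.1 l) :
    rsBracket n q (sigmaF n q i) (sigmaF n q j) p = 0 := by
  rw [rsBracket_of_pderN_eq_zero q p (fun k hk => pderN_sigmaF_of_ne q hk p)
      (fun l hl => pderN_sigmaF_of_ne q hl p), if_neg hij,
    pderX_sigmaF_of_ne q hij.symm p (hx j) (hqx j i hij.symm),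
    pderX_sigmaF_of_ne q hij p (hx i) (hqx i j hij),
    pderN_sigmaF_self, pderN_sigmaF_self,
    sigmaProd_eq_mul_prod_erase q p.1 hij.symm, sigmaProd_eq_mul_prod_erase q p.1 hij,
    sigmaFactor_eq q (hx j), sigmaFactor_eq q (hx i)]
  exact log_canonical_identity q _ _ _ _ (hxx i j hij) (hqx i j hij) (hqx j i hij.symm)

end

theorem sigma_log_canonical_general (n : ℕ) (q : ℂ)
    (p : (Fin n → ℂ) × (Fin n → ℂ))
    (hx : ∀ k, p.1 k ≠ 0)
    (hxx : ∀ k l, k ≠ l → p.1 k ≠ p.1 l)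
    (hqx : ∀ k l, k ≠ l → p.1 k ≠ q * p.1 l) :
    (∀ i j : Fin n,
      rsBracket n q (fun p' => p'.1 i) (sigmaF n q j) p =
        (if i = j then 1 else 0) * p.1 i * sigmaF n q j p) ∧
    (∀ i j : Fin n, rsBracket n q (sigmaF n q i) (sigmaF n q j) p = 0) := by
  refine ⟨fun i j => rsBracket_coord_sigmaF q i j p, fun i j => ?_⟩
  rcases eq_or_ne i j with rfl | hij
  · exact rsBracket_sigmaF_self q i p
  · exact rsBracket_sigmaF_of_ne q hij p hx hxx hqx

/-- `(x, σ)` are log-canonical coordinates, i.e. `{x_i, σ_j}' = δ_{ij} x_i σ_j`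
and `{σ_i, σ_j}' = 0` at every point of the open set `U`. -/
theorem sigma_log_canonical (n : ℕ) (hn : 1 ≤ n) (q : ℂ) (hq0 : q ≠ 0) (hq1 : q ≠ 1)
    (p : (Fin n → ℂ) × (Fin n → ℂ))
    (hx : ∀ k, p.1 k ≠ 0) (hν : ∀ k, p.2 k ≠ 0)
    (hxx : ∀ k l, k ≠ l → p.1 k ≠ p.1 l)
    (hqx : ∀ k l, k ≠ l → p.1 k ≠ q * p.1 l) :
    (∀ i j : Fin n,
      rsBracket n q (fun p' => p'.1 i) (sigmaF n q j) p =
        (if i = j then 1 else 0) * p.1 i * sigmaF n q j p) ∧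
    (∀ i j : Fin n, rsBracket n q (sigmaF n q i) (sigmaF n q j) p = 0) :=
  sigma_log_canonical_general n q p hx hxx hqx
end Aux
end

section
/- Reduction of the cyclic-quiver relations to the one-loop (tadpole) relations: let m ≥ 2, let q₀,…,q_{m−1} be nonzero complex numbers, set t_s = q₀·q₁⋯q_s for 0 ≤ s ≤ m−1 and t = t_{m−1}. Let A, B be invertible n×n complex matrices, Ṽ an n×1 matrix and W̃ a 1×n matrix such that A·B·A^{−1}·B^{−1}·(Idₙ + Ṽ·W̃) = t·Idₙ. Define X_s = Idₙ and Z_s = t_s·B for 0 ≤ s ≤ m−2, X_{m−1} = A, Z_{m−1} = t·A^{−1}·B, V = A^{−1}·B^{−1}·Ṽ and W = W̃·B·A. Then (Z_{i−1}·X_{i−1})^{−1}·X_i·Z_i = q_i·Idₙ for every 1 ≤ i ≤ m−1, and (Z_{m−1}·X_{m−1})^{−1}·X₀·Z₀·(Idₙ + V·W) = q₀·Idₙ. -/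
/-!
Every product `X_s Z_s` equals `t_s • B` (at `s = m - 1` the factor `A` cancels `A⁻¹`), while
`Z_s X_s = t_s • B` except at `s = m - 1`, where it is `t • A⁻¹ B A`. The inner relations are
therefore the ratios `t_s / t_{s-1} = q_s`. For the closing relation, `1 + V W` is the conjugate
of `1 + Ṽ W̃` by `B A`, and the tadpole relation says `1 + Ṽ W̃ = t • (A B A⁻¹ B⁻¹)⁻¹`; the
resulting word in `A` and `B` collapses to `1`, leaving `t⁻¹ · t₀ · t = q₀`.
-/

open Matrix Finset

/-- `t_s = q₀·q₁⋯q_s`. -/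
noncomputable def tpar (q : ℕ → ℂ) (s : ℕ) : ℂ := ∏ i ∈ Finset.range (s + 1), q i

/-- `X_s = Idₙ` for `0 ≤ s ≤ m−2` and `X_{m−1} = A`. -/
noncomputable def cycX (n m : ℕ) (A : Matrix (Fin n) (Fin n) ℂ) (s : ℕ) :
    Matrix (Fin n) (Fin n) ℂ :=
  if s = m - 1 then A else 1

/-- `Z_s = t_s·B` for `0 ≤ s ≤ m−2` and `Z_{m−1} = t·A⁻¹·B`. -/
noncomputable def cycZ (n m : ℕ) (q : ℕ → ℂ) (A B : Matrix (Fin n) (Fin n) ℂ) (s : ℕ) :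
    Matrix (Fin n) (Fin n) ℂ :=
  if s = m - 1 then tpar q (m - 1) • (A⁻¹ * B) else tpar q s • B

namespace Matrix

variable {K ι κ : Type*} [Field K] [Fintype ι] [DecidableEq ι] [Fintype κ]

theorem inv_smul_of_ne_zero {c : K} {M : Matrix ι ι K} (hc : c ≠ 0) (hM : IsUnit M.det) :
    (c • M)⁻¹ = c⁻¹ • M⁻¹ :=
  inv_smul' M (Units.mk0 c hc) hM

theorem smul_inv_mul_smul {c : K} (d : K) {M : Matrix ι ι K} (hc : c ≠ 0) (hM : IsUnit M.det) :
    (c • M)⁻¹ * (d • M) = (c⁻¹ * d) • 1 := by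
  rw [inv_smul_of_ne_zero hc hM, smul_mul_smul_comm, nonsing_inv_mul M hM]

theorem eq_smul_nonsing_inv_of_mul_eq_smul_one {M N : Matrix ι ι K} {c : K}
    (hM : IsUnit M.det) (h : M * N = c • 1) : N = c • M⁻¹ := by
  rw [← nonsing_inv_mul_cancel_left M N hM, h, Matrix.mul_smul, Matrix.mul_one]

theorem nonsing_inv_mul_one_add_mul_mul (P : Matrix ι ι K) (V : Matrix ι κ K)
    (W : Matrix κ ι K) (hP : IsUnit P.det) :
    P⁻¹ * (1 + V * W) * P = 1 + (P⁻¹ * V) * (W * P) := by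
  rw [Matrix.mul_add, Matrix.add_mul, Matrix.mul_one, nonsing_inv_mul P hP, Matrix.mul_assoc,
    Matrix.mul_assoc, Matrix.mul_assoc]

end Matrix

section CyclicQuiver

variable {n m : ℕ} {q : ℕ → ℂ} {A B : Matrix (Fin n) (Fin n) ℂ}

theorem tpar_zero (q : ℕ → ℂ) : tpar q 0 = q 0 := by
  simp [tpar]

theorem tpar_succ (q : ℕ → ℂ) (s : ℕ) : tpar q (s + 1) = tpar q s * q (s + 1) :=
  prod_range_succ q (s + 1)

theorem tpar_ne_zero (hq : ∀ s, s < m → q s ≠ 0) {s : ℕ} (hs : s < m) : tpar q s ≠ 0 :=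
  prod_ne_zero_iff.mpr fun i hi => hq i ((mem_range.mp hi).trans_le hs)

theorem cycX_mul_cycZ (hA : IsUnit A.det) (s : ℕ) :
    cycX n m A s * cycZ n m q A B s = tpar q s • B := by
  unfold cycX cycZ
  split_ifs with h
  · rw [Matrix.mul_smul, mul_nonsing_inv_cancel_left A B hA, h]
  · rw [Matrix.one_mul]

theorem cycZ_mul_cycX_of_ne {s : ℕ} (hs : s ≠ m - 1) :
    cycZ n m q A B s * cycX n m A s = tpar q s • B := by
  rw [cycX, cycZ, if_neg hs, if_neg hs, Matrix.mul_one]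

theorem cycZ_mul_cycX_last :
    cycZ n m q A B (m - 1) * cycX n m A (m - 1) = tpar q (m - 1) • (A⁻¹ * B * A) := by
  rw [cycX, cycZ, if_pos rfl, if_pos rfl, smul_mul]

theorem cyclic_relation_succ (hq : ∀ s, s < m → q s ≠ 0) (hA : IsUnit A.det)
    (hB : IsUnit B.det) {j : ℕ} (hj : j + 1 ≤ m - 1) :
    (cycZ n m q A B j * cycX n m A j)⁻¹ * cycX n m A (j + 1) * cycZ n m q A B (j + 1)
      = q (j + 1) • 1 := by
  have htj : tpar q j ≠ 0 := tpar_ne_zero hq (by omega)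
  rw [cycZ_mul_cycX_of_ne (by omega), Matrix.mul_assoc, cycX_mul_cycZ hA,
    smul_inv_mul_smul _ htj hB, tpar_succ, inv_mul_cancel_left₀ htj]

theorem cyclic_relation_zero (ht : tpar q (m - 1) ≠ 0) (hA : IsUnit A.det) (hB : IsUnit B.det)
    {Vt : Matrix (Fin n) (Fin 1) ℂ} {Wt : Matrix (Fin 1) (Fin n) ℂ}
    (hmom : A * B * A⁻¹ * B⁻¹ * (1 + Vt * Wt) = tpar q (m - 1) • 1) :
    (cycZ n m q A B (m - 1) * cycX n m A (m - 1))⁻¹ * cycX n m A 0 * cycZ n m q A B 0 *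
        (1 + (A⁻¹ * B⁻¹ * Vt) * (Wt * B * A)) = q 0 • 1 := by
  have hBA : IsUnit (B * A).det := by rw [det_mul]; exact hB.mul hA
  have hframing : 1 + Vt * Wt = tpar q (m - 1) • (A * B * A⁻¹ * B⁻¹)⁻¹ :=
    eq_smul_nonsing_inv_of_mul_eq_smul_one (by simp [det_mul, hA.ne_zero, hB.ne_zero]) hmom
  have hword : (A⁻¹ * B * A)⁻¹ * B * ((B * A)⁻¹ * (A * B * A⁻¹ * B⁻¹)⁻¹ * (B * A)) = 1 := by
    simp only [Matrix.mul_inv_rev, nonsing_inv_nonsing_inv A hA, nonsing_inv_nonsing_inv B hB,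
      Matrix.mul_assoc, nonsing_inv_mul_cancel_left A _ hA, nonsing_inv_mul_cancel_left B _ hB,
      mul_nonsing_inv_cancel_left A _ hA, mul_nonsing_inv_cancel_left B _ hB, nonsing_inv_mul A hA]
  rw [cycZ_mul_cycX_last, Matrix.mul_assoc _ (cycX n m A 0), cycX_mul_cycZ hA,
    ← Matrix.mul_inv_rev, Matrix.mul_assoc Wt, ← nonsing_inv_mul_one_add_mul_mul _ _ _ hBA,
    hframing, inv_smul_of_ne_zero ht (by simp [det_mul, hA.ne_zero, hB.ne_zero])]
  simp only [Matrix.smul_mul, Matrix.mul_smul, smul_smul]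
  rw [hword, tpar_zero, mul_left_comm, mul_inv_cancel₀ ht, mul_one]

end CyclicQuiver

/-- the matrices `X_s, Z_s, V, W` built from a solution
`A·B·A⁻¹·B⁻¹·(Idₙ + Ṽ·W̃) = t·Idₙ` of the tadpole relation satisfy the multiplicative
preprojective relations of the framed cyclic quiver with `m` vertices. -/
theorem cyclic_relations_from_tadpole (n m : ℕ) (hm : 2 ≤ m)
    (q : ℕ → ℂ) (hq : ∀ s, s < m → q s ≠ 0)
    (A B : Matrix (Fin n) (Fin n) ℂ) (hA : IsUnit A) (hB : IsUnit B)
    (Vt : Matrix (Fin n) (Fin 1) ℂ) (Wt : Matrix (Fin 1) (Fin n) ℂ)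
    (hmom : A * B * A⁻¹ * B⁻¹ * (1 + Vt * Wt) = tpar q (m - 1) • 1) :
    (∀ i : ℕ, 1 ≤ i → i ≤ m - 1 →
      (cycZ n m q A B (i - 1) * cycX n m A (i - 1))⁻¹ * cycX n m A i * cycZ n m q A B i
        = q i • 1) ∧
    (cycZ n m q A B (m - 1) * cycX n m A (m - 1))⁻¹ * cycX n m A 0 * cycZ n m q A B 0 *
        (1 + (A⁻¹ * B⁻¹ * Vt) * (Wt * B * A)) = q 0 • 1 := by
  rw [isUnit_iff_isUnit_det] at hA hB
  refine ⟨fun i hi him => ?_, cyclic_relation_zero (tpar_ne_zero hq (by omega)) hA hB hmom⟩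
  obtain ⟨j, rfl⟩ := Nat.exists_eq_add_of_le' hi
  rw [Nat.add_sub_cancel]
  exact cyclic_relation_succ hq hA hB him
end

section
/- Explicit inverse of the dual Ruijsenaars–Schneider Lax matrix: under the stated genericity assumptions, the n×n matrix A with entries A_{ij} = u_j·(t^{−1} − 1)/(t^{−1} − w_i w_j^{−1})·Π_{k≠j} (1 − t^{−1} w_j w_k^{−1})/(1 − w_j w_k^{−1}) is invertible, and its inverse has entries (A^{−1})_{ij} = u_i^{−1}·(t − 1)/(t − w_i w_j^{−1})·Π_{k≠j} (1 − t w_j w_k^{−1})/(1 − w_j w_k^{−1}). -/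
/-!
Clearing the ratios `w_j / w_k` brings the entries of `A = dualLax n t w u` and
`B = dualLaxInv n t w u` to the form
`A_{ij} = u_j ∏_{m≠i} (t⁻¹ w_j - w_m) / ∏_{m≠j} (w_j - w_m)` and
`B_{jk} = u_j⁻¹ ∏_{l≠j} (t w_k - w_l) / ∏_{l≠k} (w_k - w_l)`.
Up to the factor `1 / ∏_{l≠k} (w_k - w_l)`, the entry `(A B)_{ik}` is then the Lagrange
interpolation at the nodes `w` of the polynomial `y ↦ ∏_{m≠i} (t⁻¹ y - w_m)` of degree `< n`,
evaluated at `t w_k`. Its value `∏_{m≠i} (w_k - w_m)` vanishes unless `i = k`.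
-/

open Matrix Finset

/-- The dual Ruijsenaars–Schneider Lax matrix
`A_{ij} = u_j·(t⁻¹−1)/(t⁻¹ − w_i w_j⁻¹)·Π_{k≠j}(1 − t⁻¹ w_j w_k⁻¹)/(1 − w_j w_k⁻¹)`. -/
noncomputable def dualLax (n : ℕ) (t : ℂ) (w u : Fin n → ℂ) : Matrix (Fin n) (Fin n) ℂ :=
  Matrix.of fun i j =>
    u j * (t⁻¹ - 1) / (t⁻¹ - w i * (w j)⁻¹) *
      ∏ k ∈ Finset.univ \ {j}, (1 - t⁻¹ * w j * (w k)⁻¹) / (1 - w j * (w k)⁻¹)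

/-- The claimed explicit inverse
`(A⁻¹)_{ij} = u_i⁻¹·(t−1)/(t − w_i w_j⁻¹)·Π_{k≠j}(1 − t w_j w_k⁻¹)/(1 − w_j w_k⁻¹)`. -/
noncomputable def dualLaxInv (n : ℕ) (t : ℂ) (w u : Fin n → ℂ) : Matrix (Fin n) (Fin n) ℂ :=
  Matrix.of fun i j =>
    (u i)⁻¹ * (t - 1) / (t - w i * (w j)⁻¹) *
      ∏ k ∈ Finset.univ \ {j}, (1 - t * w j * (w k)⁻¹) / (1 - w j * (w k)⁻¹)

open Polynomial

theorem sub_one_div_sub_mul_inv {F : Type*} [Field F] {b : F} (hb : b ≠ 0) (s a : F) :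
    (s - 1) / (s - a * b⁻¹) = (s * b - b) / (s * b - a) := by
  rw [← mul_div_mul_right _ _ hb]
  congr 1 <;> field_simp

theorem one_sub_mul_inv_div_one_sub_mul_inv {F : Type*} [Field F] {b : F} (hb : b ≠ 0)
    (s a : F) :
    (1 - s * a * b⁻¹) / (1 - a * b⁻¹) = (s * a - b) / (a - b) := by
  rw [← mul_div_mul_right _ _ (neg_ne_zero.2 hb)]
  congr 1 <;> field_simp <;> ring

theorem Finset.div_mul_prod_erase {M ι : Type*} [CommGroupWithZero M] [DecidableEq ι]
    {s : Finset ι} {f : ι → M} {i j : ι} (hi : i ∈ s) (hj : j ∈ s) (hfi : f i ≠ 0) :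
    f j / f i * ∏ m ∈ s.erase j, f m = ∏ m ∈ s.erase i, f m := by
  rw [div_mul_eq_mul_div, mul_prod_erase s f hj, ← mul_prod_erase s f hi,
    mul_div_cancel_left₀ _ hfi]

theorem Polynomial.degree_prod_erase_C_mul_X_sub_C_lt {R ι : Type*} [CommRing R]
    [DecidableEq ι] {s : Finset ι} {i : ι} (hi : i ∈ s) (a : R) (b : ι → R) :
    (∏ m ∈ s.erase i, (C a * X - C (b m))).degree < ↑(#s) := by
  refine degree_le_natDegree.trans_lt ?_
  have hfactor : ∀ m, (C a * X - C (b m)).natDegree ≤ 1 := fun m => by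
    rw [natDegree_sub_C]
    exact natDegree_le_iff_degree_le.2 (degree_C_mul_X_le a)
  have hprod := (natDegree_prod_le (s.erase i) _).trans
    (sum_le_card_nsmul _ _ 1 fun m _ => hfactor m)
  rw [smul_eq_mul, mul_one] at hprod
  exact_mod_cast hprod.trans_lt (card_erase_lt_of_mem hi)

section Lagrange

variable {F ι : Type*} [Field F] [DecidableEq ι] {s : Finset ι} {v : ι → F}

theorem Lagrange.eval_eq_sum_mul_prod_div (hvs : Set.InjOn v s) {f : F[X]}
    (hf : f.degree < #s) (x : F) :
    f.eval x = ∑ j ∈ s, f.eval (v j) *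
      ((∏ l ∈ s.erase j, (x - v l)) / ∏ l ∈ s.erase j, (v j - v l)) := by
  conv_lhs => rw [Lagrange.eq_interpolate hvs hf]
  simp only [Lagrange.interpolate_apply, eval_finsetSum, eval_mul, eval_C, Lagrange.basis,
    Lagrange.basisDivisor, eval_prod, eval_sub, eval_X, ← prod_div_distrib]
  simp [div_eq_inv_mul]

theorem Lagrange.sum_prod_erase_mul_prod_div (hvs : Set.InjOn v s) {i : ι} (hi : i ∈ s)
    (a x : F) (b : ι → F) :
    ∑ j ∈ s, (∏ m ∈ s.erase i, (a * v j - b m)) *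
      ((∏ l ∈ s.erase j, (x - v l)) / ∏ l ∈ s.erase j, (v j - v l)) =
      ∏ m ∈ s.erase i, (a * x - b m) := by
  simpa [eval_prod] using
    (eval_eq_sum_mul_prod_div hvs (degree_prod_erase_C_mul_X_sub_C_lt hi a b) x).symm

end Lagrange

section DualLax

variable {n : ℕ} {t : ℂ} {w u : Fin n → ℂ}

theorem dualLax_apply_eq (ht : t ≠ 0) (hw : ∀ i, w i ≠ 0) (htw : ∀ i j, w i ≠ t * w j)
    (i j : Fin n) :
    dualLax n t w u i j =
      u j * (∏ m ∈ univ.erase i, (t⁻¹ * w j - w m)) / ∏ m ∈ univ.erase j, (w j - w m) := by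
  have hji : t⁻¹ * w j - w i ≠ 0 :=
    sub_ne_zero.2 fun h => htw j i (by rw [← h, mul_inv_cancel_left₀ ht])
  simp only [dualLax, of_apply, sdiff_singleton_eq_erase,
    one_sub_mul_inv_div_one_sub_mul_inv (hw _), prod_div_distrib]
  rw [mul_div_assoc, sub_one_div_sub_mul_inv (hw j),
    ← div_mul_prod_erase (f := fun m => t⁻¹ * w j - w m) (mem_univ i) (mem_univ j) hji]
  ring

theorem dualLaxInv_apply_eq (hw : ∀ i, w i ≠ 0) (htw : ∀ i j, w i ≠ t * w j) (j k : Fin n) :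
    dualLaxInv n t w u j k =
      (u j)⁻¹ * (∏ l ∈ univ.erase j, (t * w k - w l)) / ∏ l ∈ univ.erase k, (w k - w l) := by
  have hkj : t * w k - w j ≠ 0 := sub_ne_zero.2 (htw j k).symm
  simp only [dualLaxInv, of_apply, sdiff_singleton_eq_erase,
    one_sub_mul_inv_div_one_sub_mul_inv (hw _), prod_div_distrib]
  rw [mul_div_assoc, sub_one_div_sub_mul_inv (hw k),
    ← div_mul_prod_erase (f := fun l => t * w k - w l) (mem_univ j) (mem_univ k) hkj]
  ring

theorem dualLax_mul_dualLaxInv (ht : t ≠ 0) (hw : ∀ i, w i ≠ 0) (hu : ∀ i, u i ≠ 0)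
    (hww : ∀ i j, i ≠ j → w i ≠ w j) (htw : ∀ i j, w i ≠ t * w j) :
    dualLax n t w u * dualLaxInv n t w u = 1 := by
  ext i k
  have hinj : Set.InjOn w (univ : Finset (Fin n)) := fun a _ b _ hab =>
    by_contra fun h => hww a b h hab
  have hD : ∀ k, ∏ l ∈ univ.erase k, (w k - w l) ≠ 0 := fun k =>
    prod_ne_zero_iff.2 fun l hl => sub_ne_zero.2 (hww k l (ne_of_mem_erase hl).symm)
  calc (dualLax n t w u * dualLaxInv n t w u) i k
      = (∑ j, (∏ m ∈ univ.erase i, (t⁻¹ * w j - w m)) *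
          ((∏ l ∈ univ.erase j, (t * w k - w l)) / ∏ l ∈ univ.erase j, (w j - w l))) /
          ∏ l ∈ univ.erase k, (w k - w l) := by
        rw [mul_apply, sum_div]
        refine sum_congr rfl fun j _ => ?_
        rw [dualLax_apply_eq ht hw htw, dualLaxInv_apply_eq hw htw]
        field_simp [hu j, hD j, hD k]
    _ = (∏ m ∈ univ.erase i, (w k - w m)) / ∏ l ∈ univ.erase k, (w k - w l) := by
        rw [Lagrange.sum_prod_erase_mul_prod_div hinj (mem_univ i), inv_mul_cancel_left₀ ht]
    _ = (1 : Matrix (Fin n) (Fin n) ℂ) i k := by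
        rcases eq_or_ne i k with rfl | hik
        · rw [one_apply_eq, div_self (hD i)]
        · rw [one_apply_ne hik, prod_eq_zero (mem_erase.2 ⟨hik.symm, mem_univ k⟩) (sub_self _),
            zero_div]

end DualLax

theorem dualLax_inverse_general (n : ℕ) (t : ℂ) (ht : t ≠ 0)
    (w u : Fin n → ℂ) (hw : ∀ i, w i ≠ 0) (hu : ∀ i, u i ≠ 0)
    (hww : ∀ i j, i ≠ j → w i ≠ w j) (htw : ∀ i j, w i ≠ t * w j) :
    IsUnit (dualLax n t w u) ∧ (dualLax n t w u)⁻¹ = dualLaxInv n t w u := by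
  have h := dualLax_mul_dualLaxInv ht hw hu hww htw
  exact ⟨(isUnit_iff_isUnit_det _).2 (isUnit_det_of_right_inverse h), inv_eq_right_inv h⟩

/-- `A` is invertible with the stated explicit inverse. -/
theorem dualLax_inverse (n : ℕ) (hn : 1 ≤ n) (t : ℂ) (ht : t ≠ 0)
    (w u : Fin n → ℂ) (hw : ∀ i, w i ≠ 0) (hu : ∀ i, u i ≠ 0)
    (hww : ∀ i j, i ≠ j → w i ≠ w j) (htw : ∀ i j, w i ≠ t * w j) :
    IsUnit (dualLax n t w u) ∧ (dualLax n t w u)⁻¹ = dualLaxInv n t w u :=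
  dualLax_inverse_general n t ht w u hw hu hww htw
end

section
/- Explicit formula for the generalised Ruijsenaars–Schneider Hamiltonian G_{m,1}: under the stated genericity assumptions, for every integer m ≥ 1, tr(A^{−1}·B^m) = Σ σ_{j₀}⋯σ_{j_{m−1}} · x_{j₀}^{−1} · Π_{s=0}^{m−1} (t−1)/(t − x_{j_s} x_{j_{s+1}}^{−1}) · Π_{s=0}^{m−1} Π_{a≠j_s} Υ_{j_s a}, where the sum is over all tuples (j₀,…,j_{m−1}) with 1 ≤ j_s ≤ n, indices are read cyclically (j_m := j₀), and Υ_{i a} = (1 − t x_i x_a^{−1})/(1 − x_i x_a^{−1}). -/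
open Matrix Finset

/-- The Ruijsenaars–Schneider Lax matrix in the coordinates `(x, σ)`:
`B_{ij} = σ_j·(t−1)/(t − x_i x_j⁻¹)·Π_{k≠j}(1 − t x_j x_k⁻¹)/(1 − x_j x_k⁻¹)`. -/
noncomputable def BLax (n : ℕ) (t : ℂ) (x σ : Fin n → ℂ) : Matrix (Fin n) (Fin n) ℂ :=
  Matrix.of fun i j =>
    σ j * (t - 1) / (t - x i * (x j)⁻¹) *
      ∏ k ∈ Finset.univ \ {j}, (1 - t * x j * (x k)⁻¹) / (1 - x j * (x k)⁻¹)

/-- `Υ_{ia} = (1 − t x_i x_a⁻¹)/(1 − x_i x_a⁻¹)`. -/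
noncomputable def Ups (n : ℕ) (t : ℂ) (x : Fin n → ℂ) (i a : Fin n) : ℂ :=
  (1 - t * x i * (x a)⁻¹) / (1 - x i * (x a)⁻¹)

/-! The identity is purely combinatorial: expanding `tr(D Bᵐ)` for a diagonal `D` gives a sum
over closed walks `j₀ → j₁ → ⋯ → j_{m-1} → j₀` of `D_{j₀ j₀}` times the product of the entries
of `B` along the walk, and each entry `B_{j_s j_{s+1}}` splits into the factor
`(t − 1)/(t − x_{j_s} x_{j_{s+1}}⁻¹)` and factors `σ_{j_{s+1}} Π_a Υ_{j_{s+1} a}` depending on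
the endpoint only, whose product over a closed walk may be reindexed by `j_s`. -/

theorem Fin.snoc_tail_zero_apply {α : Type*} {m : ℕ} (j : Fin (m + 1) → α) (s : Fin (m + 1)) :
    Fin.snoc (α := fun _ => α) (Fin.tail j) (j 0) s = j (s + 1) := by
  simp [Fin.snoc_eq_cons_rotate]

namespace Matrix

variable {ι R : Type*} [Fintype ι] [DecidableEq ι] [CommSemiring R]

theorem pow_succ_apply_eq_sum_paths (M : Matrix ι ι R) (m : ℕ) (i k : ι) :
    (M ^ (m + 1)) i k = ∑ p : Fin m → ι, ∏ s : Fin (m + 1),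
      M (Fin.cons (α := fun _ => ι) i p s) (Fin.snoc (α := fun _ => ι) p k s) := by
  induction m generalizing k with
  | zero => simp [Fin.snoc]
  | succ m ih =>
    rw [pow_succ, mul_apply, ← (Fin.snocEquiv fun _ => ι).sum_comp, Fintype.sum_prod_type]
    simp_rw [ih, Finset.sum_mul]
    refine Finset.sum_congr rfl fun l _ => Finset.sum_congr rfl fun p _ => ?_
    simp [Fin.prod_univ_castSucc, Fin.snocEquiv, Fin.cons_snoc_eq_snoc_cons]

theorem trace_diagonal_mul_pow_eq_sum_cycles (d : ι → R) (M : Matrix ι ι R) (m : ℕ) [NeZero m] :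
    trace (diagonal d * M ^ m) = ∑ j : Fin m → ι, d (j 0) * ∏ s, M (j s) (j (s + 1)) := by
  obtain ⟨m, rfl⟩ := Nat.exists_eq_succ_of_ne_zero (NeZero.ne m)
  rw [← (Fin.consEquiv fun _ => ι).sum_comp, Fintype.sum_prod_type]
  simp only [trace, diag, diagonal_mul, pow_succ_apply_eq_sum_paths, Finset.mul_sum]
  refine Finset.sum_congr rfl fun i _ => Finset.sum_congr rfl fun p _ => ?_
  simp [Fin.consEquiv, ← Fin.snoc_tail_zero_apply]

end Matrix

theorem BLax_apply (n : ℕ) (t : ℂ) (x σ : Fin n → ℂ) (i k : Fin n) :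
    BLax n t x σ i k =
      σ k * ((t - 1) / (t - x i * (x k)⁻¹)) * ∏ a ∈ univ \ {k}, Ups n t x k a := by
  rw [BLax, of_apply, mul_div_assoc]
  rfl

theorem trace_Ainv_Bm_formula_general (n : ℕ) (t : ℂ)
    (x σ : Fin n → ℂ) (hx : ∀ i, x i ≠ 0)
    (m : ℕ) [NeZero m] :
    Matrix.trace ((Matrix.diagonal x)⁻¹ * BLax n t x σ ^ m) =
      ∑ j : Fin m → Fin n,
        (∏ s : Fin m, σ (j s)) * (x (j 0))⁻¹ *
          (∏ s : Fin m, (t - 1) / (t - x (j s) * (x (j (s + 1)))⁻¹)) *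
          ∏ s : Fin m, ∏ a ∈ Finset.univ \ {j s}, Ups n t x (j s) a := by
  have hinv : (diagonal x)⁻¹ = diagonal x⁻¹ :=
    inv_eq_left_inv (by simp [diagonal_mul_diagonal, hx])
  rw [hinv, trace_diagonal_mul_pow_eq_sum_cycles]
  refine Finset.sum_congr rfl fun j _ => ?_
  have prod_shift (f : Fin n → ℂ) : ∏ s : Fin m, f (j (s + 1)) = ∏ s, f (j s) :=
    Equiv.prod_comp (Equiv.addRight (1 : Fin m)) (f ∘ j)
  simp_rw [BLax_apply, prod_mul_distrib]
  rw [prod_shift σ, prod_shift fun k => ∏ a ∈ univ \ {k}, Ups n t x k a, Pi.inv_apply]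
  ring

/-- explicit formula for the generalised Ruijsenaars–Schneider Hamiltonian
`G_{m,1} = tr(A⁻¹ B^m)`, as a sum over tuples `(j₀,…,j_{m−1})` read cyclically. -/
theorem trace_Ainv_Bm_formula (n : ℕ) (hn : 1 ≤ n) (t : ℂ) (ht : t ≠ 0)
    (x σ : Fin n → ℂ) (hx : ∀ i, x i ≠ 0)
    (hxx : ∀ i j, i ≠ j → x i ≠ x j) (htx : ∀ i j, x i ≠ t * x j)
    (m : ℕ) [NeZero m] (hm : 1 ≤ m) :
    Matrix.trace ((Matrix.diagonal x)⁻¹ * BLax n t x σ ^ m) =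
      ∑ j : Fin m → Fin n,
        (∏ s : Fin m, σ (j s)) * (x (j 0))⁻¹ *
          (∏ s : Fin m, (t - 1) / (t - x (j s) * (x (j (s + 1)))⁻¹)) *
          ∏ s : Fin m, ∏ a ∈ Finset.univ \ {j s}, Ups n t x (j s) a :=
  trace_Ainv_Bm_formula_general n t x σ hx m
end

section
/- The key trace identity in the proof that the cyclic-quiver Calogero–Moser space is Poisson-isomorphic to the tadpole one: let m ≥ 2, let t₀,…,t_{m−1} be complex numbers extended m-periodically (t_{i+m} = t_i), and set τ = Σ_{i=0}^{m−1} t_i. Let A, B be n×n complex matrices and let 0 ≤ β < γ be integers. For an integer r write r = p·m + j with 0 ≤ j ≤ m−1, and for 0 ≤ i ≤ m−1 set ε(i,j) = 1 if i + j ≥ m and ε(i,j) = 0 otherwise. Then Σ_{r=βm}^{γm−1} Σ_{i=0}^{m−1} t_i·t_{i+j} · tr(B·A^{p+ε(i,j)}·B·A^{β+γ−p−ε(i,j)}) = τ² · Σ_{p=β}^{γ−1} tr(B·A^{p}·B·A^{β+γ−p}). -/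
open Matrix Finset

def epsShift (m i j : ℕ) : ℕ := if m ≤ i + j then 1 else 0

/-
Write `r = p m + j`. Since `ε(i,j) ∈ {0,1}` and the trace cyclicity gives `F γ = F β` for
`F p = tr(B A^p B A^{β+γ-p})`, shifting `p` by `ε(i,j)` does not change `Σ_{β ≤ p < γ} F p`.
The sum therefore factors as `(Σ_{i,j < m} t_i t_{i+j}) · Σ_p F p`, and by periodicity
`Σ_{j < m} t_{i+j} = τ` for every `i`.
-/

section Sums

variable {M : Type*} [AddCommMonoid M]

theorem Finset.sum_range_succ_eq_of_eq {g : ℕ → M} {N : ℕ} (h : g N = g 0) :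
    ∑ k ∈ range N, g (k + 1) = ∑ k ∈ range N, g k := by
  cases N with
  | zero => simp
  | succ N => rw [sum_range_succ, sum_range_succ', h]

theorem Finset.sum_Ico_succ_eq_of_eq {f : ℕ → M} {β γ : ℕ} (h : β ≤ γ) (hf : f γ = f β) :
    ∑ p ∈ Ico β γ, f (p + 1) = ∑ p ∈ Ico β γ, f p := by
  rw [sum_Ico_eq_sum_range, sum_Ico_eq_sum_range]
  exact sum_range_succ_eq_of_eq (g := fun k => f (β + k)) (by simpa [Nat.add_sub_of_le h])

theorem Finset.sum_Ico_mul_eq_sum_Ico_sum_range (g : ℕ → M) (m : ℕ) {β γ : ℕ} (h : β ≤ γ) :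
    ∑ r ∈ Ico (β * m) (γ * m), g r = ∑ p ∈ Ico β γ, ∑ j ∈ range m, g (p * m + j) := by
  induction γ, h using Nat.le_induction with
  | base => simp
  | succ γ h ih =>
    rw [sum_Ico_succ_top h, ← ih, Nat.succ_mul,
      ← sum_Ico_consecutive _ (Nat.mul_le_mul_right m h) (Nat.le_add_right _ _),
      sum_Ico_eq_sum_range g (γ * m), Nat.add_sub_cancel_left]

theorem Function.Periodic.sum_range_add {t : ℕ → M} {m : ℕ} (ht : Function.Periodic t m)
    (k : ℕ) : ∑ j ∈ range m, t (k + j) = ∑ j ∈ range m, t j := by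
  induction k with
  | zero => simp
  | succ k ih =>
    rw [← ih, ← sum_range_succ_eq_of_eq (g := fun j => t (k + j)) (by simpa using ht k)]
    exact sum_congr rfl fun j _ => congrArg t (by omega)

theorem sum_Ico_add_epsShift {f : ℕ → M} {β γ : ℕ} (h : β ≤ γ) (hf : f γ = f β) (m i j : ℕ) :
    ∑ p ∈ Ico β γ, f (p + epsShift m i j) = ∑ p ∈ Ico β γ, f p := by
  unfold epsShift
  split_ifs
  · exact sum_Ico_succ_eq_of_eq h hf
  · rfl

end Sums

section Coefficients

variable {R : Type*} [CommSemiring R]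

theorem Function.Periodic.sum_range_mul_sum_range_add {t : ℕ → R} {m : ℕ}
    (ht : Function.Periodic t m) :
    ∑ i ∈ range m, ∑ j ∈ range m, t i * t (i + j) = (∑ i ∈ range m, t i) ^ 2 := by
  simp only [← mul_sum, ht.sum_range_add, ← sum_mul, sq]

theorem sum_Ico_mul_sum_range_epsShift {t : ℕ → R} {m : ℕ} (ht : Function.Periodic t m)
    (f : ℕ → R) {β γ : ℕ} (h : β ≤ γ) (hf : f γ = f β) :
    ∑ r ∈ Ico (β * m) (γ * m), ∑ i ∈ range m,
        t i * t (i + r % m) * f (r / m + epsShift m i (r % m)) =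
      (∑ i ∈ range m, t i) ^ 2 * ∑ p ∈ Ico β γ, f p := by
  calc _ = ∑ p ∈ Ico β γ, ∑ j ∈ range m, ∑ i ∈ range m,
          t i * t (i + j) * f (p + epsShift m i j) := by
        rw [sum_Ico_mul_eq_sum_Ico_sum_range _ _ h]
        refine sum_congr rfl fun p _ => sum_congr rfl fun j hj => ?_
        have hj : j < m := mem_range.mp hj
        rw [Nat.mul_add_mod_of_lt hj, mul_comm p m, Nat.mul_add_div (by omega),
          Nat.div_eq_of_lt hj, add_zero]
    _ = ∑ j ∈ range m, ∑ i ∈ range m, t i * t (i + j) * ∑ p ∈ Ico β γ, f p := by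
        rw [sum_comm]
        refine sum_congr rfl fun j _ => ?_
        rw [sum_comm]
        simp only [← mul_sum, sum_Ico_add_epsShift h hf]
    _ = _ := by rw [sum_comm, ← ht.sum_range_mul_sum_range_add, sum_mul]; simp_rw [sum_mul]

end Coefficients

theorem cyclic_trace_sum_identity_general (n m : ℕ)
    (t : ℕ → ℂ) (hper : ∀ i, t (i + m) = t i)
    (A B : Matrix (Fin n) (Fin n) ℂ) (β γ : ℕ) (hβγ : β < γ) :
    ∑ r ∈ Finset.Ico (β * m) (γ * m), ∑ i ∈ Finset.range m,
        t i * t (i + r % m) *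
          Matrix.trace (B * A ^ (r / m + epsShift m i (r % m)) * B *
            A ^ (β + γ - r / m - epsShift m i (r % m))) =
      (∑ i ∈ Finset.range m, t i) ^ 2 *
        ∑ p ∈ Finset.Ico β γ, Matrix.trace (B * A ^ p * B * A ^ (β + γ - p)) := by
  have htrace :
      trace (B * A ^ γ * B * A ^ (β + γ - γ)) = trace (B * A ^ β * B * A ^ (β + γ - β)) := by
    rw [Nat.add_sub_cancel, Nat.add_sub_cancel_left, mul_assoc, trace_mul_comm, ← mul_assoc]
  simp only [Nat.sub_sub]
  exact sum_Ico_mul_sum_range_epsShift hper (fun p => trace (B * A ^ p * B * A ^ (β + γ - p)))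
    hβγ.le htrace

/-- the key trace identity in the proof that the cyclic-quiver Calogero–Moser
space is Poisson-isomorphic to the tadpole one.  Here `p = ⌊r/m⌋` and `j = r mod m`, and the
`m`-periodic parameters satisfy `t_{i+m} = t_i` with `τ = Σ_{i=0}^{m−1} t_i`. -/
theorem cyclic_trace_sum_identity (n m : ℕ) (hm : 2 ≤ m)
    (t : ℕ → ℂ) (hper : ∀ i, t (i + m) = t i)
    (A B : Matrix (Fin n) (Fin n) ℂ) (β γ : ℕ) (hβγ : β < γ) :
    ∑ r ∈ Finset.Ico (β * m) (γ * m), ∑ i ∈ Finset.range m,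
        t i * t (i + r % m) *
          Matrix.trace (B * A ^ (r / m + epsShift m i (r % m)) * B *
            A ^ (β + γ - r / m - epsShift m i (r % m))) =
      (∑ i ∈ Finset.range m, t i) ^ 2 *
        ∑ p ∈ Finset.Ico β γ, Matrix.trace (B * A ^ p * B * A ^ (β + γ - p)) :=
  cyclic_trace_sum_identity_general n m t hper A B β γ hβγ
end
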